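/- arXiv:2510.04944 — 11 statements merged into one kernel-verified Lean document; each statement's English description precedes it below -/
import Mathlib

section
/- Scalar-identity state-space duality: consider the recurrence h_0 = 0 ∈ ℝ^{N×d}, h_t = a_t h_{t-1} + b_t x_t, y_t = c_tᵀ h_t for t = 1,…,T, where a_t ∈ ℝ are scalars (i.e., the state matrix is A^t = a_t I_N), b_t, c_t ∈ ℝ^{N×1}, x_t ∈ ℝ^{1×d}. Let B, C ∈ ℝ^{T×N} be the matrices whose t-th rows are b_tᵀ and c_tᵀ, let X, Y ∈ ℝ^{T×d} be the matrices whose t-th rows are x_t and y_t, and let a = (a_1,…,a_T). Then Y = (1SS(a) ⊙ (C Bᵀ)) X. -/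
open Matrix

/-- `oneSS a t s = a_t ⋯ a_{s+1}` for `s ≤ t` (empty product `1` when `s = t`) and `0` otherwise:
the `(t,s)` entry of the 1-semiseparable matrix `1SS(a)`. -/
noncomputable def oneSS (a : ℕ → ℝ) (t s : ℕ) : ℝ :=
  if s ≤ t then ∏ k ∈ Finset.Ioc s t, a k else 0

/-- **scalar-identity state-space duality.**
For the recurrence `h_0 = 0`, `h_t = a_t h_{t-1} + b_t x_t`, `y_t = c_tᵀ h_t`
(state matrix `A^t = a_t I_N`), with `B, C ∈ ℝ^{T×N}` collecting the rows `b_tᵀ, c_tᵀ` and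
`X, Y ∈ ℝ^{T×d}` collecting the rows `x_t, y_t`, one has `Y = (1SS(a) ⊙ (C Bᵀ)) X`. -/
theorem scalar_identity_ssd (T N d : ℕ)
    (a : ℕ → ℝ) (b c : ℕ → Fin N → ℝ) (x : ℕ → Fin d → ℝ)
    (h : ℕ → Matrix (Fin N) (Fin d) ℝ)
    (h0 : h 0 = 0)
    (hrec : ∀ t, 1 ≤ t → t ≤ T →
      h t = a t • h (t - 1) + Matrix.of (fun (n : Fin N) (s : Fin d) => b t n * x t s)) :
    (Matrix.of fun (t : Fin T) (j : Fin d) => ∑ n : Fin N, c (↑t + 1) n * h (↑t + 1) n j) =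
      (Matrix.hadamard
          (Matrix.of fun (t s : Fin T) => oneSS a (↑t + 1) (↑s + 1))
          ((Matrix.of fun (t : Fin T) (n : Fin N) => c (↑t + 1) n) *
            (Matrix.of fun (t : Fin T) (n : Fin N) => b (↑t + 1) n)ᵀ)) *
        (Matrix.of fun (t : Fin T) (j : Fin d) => x (↑t + 1) j) := by
  -- closed form for h
  have key : ∀ t, t ≤ T → ∀ n j,
      h t n j = ∑ s ∈ Finset.Icc 1 t, (∏ k ∈ Finset.Ioc s t, a k) * (b s n * x s j) := by
    intro t
    induction t with
    | zero => intro _ n j; simp [h0]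
    | succ t ih =>
      intro hT n j
      have ht : t ≤ T := Nat.le_of_succ_le hT
      rw [hrec (t + 1) (Nat.succ_le_succ (Nat.zero_le t)) hT]
      simp only [Nat.add_sub_cancel, Matrix.add_apply, Matrix.smul_apply, Matrix.of_apply,
        smul_eq_mul, ih ht n j]
      rw [Finset.sum_Icc_succ_top (Nat.succ_le_succ (Nat.zero_le t))]
      rw [Finset.mul_sum]
      congr 1
      · apply Finset.sum_congr rfl
        intro s hs
        have hs' : s ≤ t := (Finset.mem_Icc.mp hs).2
        rw [Finset.prod_Ioc_succ_top (by omega : s ≤ t), ← mul_assoc, mul_comm (a (t+1))]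
      · simp
  ext t j
  simp only [Matrix.mul_apply, Matrix.hadamard_apply, Matrix.of_apply, Matrix.transpose_apply]
  have htT : (t : ℕ) + 1 ≤ T := t.isLt
  rw [show (∑ n : Fin N, c (↑t + 1) n * h (↑t + 1) n j) =
      ∑ s ∈ Finset.Icc 1 ((t : ℕ) + 1), (∏ k ∈ Finset.Ioc s ((t : ℕ) + 1), a k) *
        (∑ n : Fin N, c (↑t + 1) n * b s n) * x s j by
    simp only [key (↑t + 1) htT, Finset.mul_sum]
    rw [Finset.sum_comm]
    apply Finset.sum_congr rfl
    intro s _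
    rw [Finset.sum_mul]
    apply Finset.sum_congr rfl
    intro n _
    ring]
  -- now convert the Fin T sum on the RHS
  rw [Fin.sum_univ_eq_sum_range
    (fun s => oneSS a (↑t + 1) (s + 1) * (∑ n, c (↑t + 1) n * b (s + 1) n) * x (s + 1) j)]
  rw [show Finset.Icc 1 ((t : ℕ) + 1) = Finset.image (· + 1) (Finset.range ((t : ℕ) + 1)) by
    ext s
    simp only [Finset.mem_Icc, Finset.mem_image, Finset.mem_range]
    constructor
    · rintro ⟨h1, h2⟩; exact ⟨s - 1, by omega, by omega⟩
    · rintro ⟨m, hm, rfl⟩; omega]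
  rw [Finset.sum_image (by intro a _ b _ hab; simp only at hab; omega)]
  rw [← Finset.sum_subset (Finset.range_subset_range.mpr htT)]
  · apply Finset.sum_congr rfl
    intro s hs
    have hs' : s < (t : ℕ) + 1 := Finset.mem_range.mp hs
    unfold oneSS
    rw [if_pos (by omega)]
  · intro s hsT hs
    have : ¬ s + 1 ≤ (t : ℕ) + 1 := by
      simp only [Finset.mem_range] at hsT hs; omega
    unfold oneSS
    rw [if_neg this]
    ring
end

section
/- Attention-like dual of diagonal SSMs: let M ∈ ℝ^{T×T} be lower triangular with M_{j,i} = c_jᵀ A^j A^{j-1} ⋯ A^{i+1} b_i for all 1 ≤ i ≤ j ≤ T, where b_1,…,b_T, c_1,…,c_T ∈ ℝ^N and each A^t ∈ ℝ^{N×N} is diagonal. For each n ∈ {1,…,N} set aⁿ = (A^1_{n,n}, A^2_{n,n}, …, A^T_{n,n}) ∈ ℝ^T, and let bⁿ, cⁿ ∈ ℝ^T be given by bⁿ_t = (b_t)_n and cⁿ_t = (c_t)_n. Then M = Σ_{n=1}^{N} 1SS(aⁿ) ⊙ (cⁿ (bⁿ)ᵀ); that is, M_{j,i} = Σ_{n=1}^{N}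 1SS(aⁿ)_{j,i} (c_j)_n (b_i)_n for all 1 ≤ i ≤ j ≤ T. -/
open Matrix

/-- Ordered matrix product `matProd A i k = A (i+k) * A (i+k-1) * ⋯ * A (i+1)`,
so that `matProd A i (j - i) = A^j ⋯ A^{i+1}` (the identity when `j = i`). -/
noncomputable def matProd {N : ℕ} (A : ℕ → Matrix (Fin N) (Fin N) ℝ) (i : ℕ) :
    ℕ → Matrix (Fin N) (Fin N) ℝ
  | 0 => 1
  | k + 1 => A (i + k + 1) * matProd A i k

lemma matProd_diag (T N : ℕ) (A : ℕ → Matrix (Fin N) (Fin N) ℝ)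
    (hdiag : ∀ t, 1 ≤ t → t ≤ T → (A t).IsDiag) (i : ℕ) (hi : 1 ≤ i) :
    ∀ k, i + k ≤ T →
      matProd A i k = Matrix.diagonal (fun n => ∏ l ∈ Finset.Ioc i (i + k), A l n n) := by
  intro k
  induction k with
  | zero => intro _; simp [matProd, Matrix.diagonal_one]
  | succ k ih =>
    intro hk
    have hk' : i + k ≤ T := by omega
    have hA : A (i + k + 1) = Matrix.diagonal (fun n => A (i + k + 1) n n) :=
      ((hdiag (i + k + 1) (by omega) (by omega)).diagonal_diag).symm
    rw [matProd, ih hk', hA, Matrix.diagonal_mul_diagonal]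
    apply congrArg Matrix.diagonal
    funext n
    show A (i + k + 1) n n * ∏ l ∈ Finset.Ioc i (i + k), A l n n
        = ∏ l ∈ Finset.Ioc i (i + k + 1), A l n n
    rw [Finset.prod_Ioc_succ_top (by omega : i ≤ i + k)]
    ring

/-- **attention-like dual of diagonal SSMs.**
If `M_{j,i} = c_jᵀ A^j ⋯ A^{i+1} b_i` with each `A^t` diagonal, then
`M_{j,i} = Σ_{n=1}^{N} 1SS(aⁿ)_{j,i} (c_j)_n (b_i)_n` where `aⁿ_t = A^t_{n,n}`,
i.e. `M = Σ_{n=1}^{N} 1SS(aⁿ) ⊙ (cⁿ (bⁿ)ᵀ)`. -/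
theorem diagonal_ssm_attention_dual (T N : ℕ)
    (A : ℕ → Matrix (Fin N) (Fin N) ℝ)
    (hdiag : ∀ t, 1 ≤ t → t ≤ T → (A t).IsDiag)
    (b c : ℕ → Fin N → ℝ) (M : ℕ → ℕ → ℝ)
    (hM : ∀ i j, 1 ≤ i → i ≤ j → j ≤ T →
      M j i = c j ⬝ᵥ (matProd A i (j - i)).mulVec (b i)) :
    ∀ i j, 1 ≤ i → i ≤ j → j ≤ T →
      M j i = ∑ n : Fin N, oneSS (fun t => A t n n) j i * (c j n * b i n) := by
  intro i j hi hij hjT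
  rw [hM i j hi hij hjT,
    matProd_diag T N A hdiag i hi (j - i) (by omega)]
  have hji : i + (j - i) = j := by omega
  rw [hji]
  simp only [oneSS, if_pos hij, dotProduct, Matrix.mulVec_diagonal]
  exact Finset.sum_congr rfl fun n _ => by ring
end

section
/- If a lower triangular matrix M ∈ ℝ^{T×T} admits an N-SSS representation, then M is N-semiseparable: every contiguous submatrix of M consisting only of entries on or below the main diagonal has rank at most N. -/
open Matrix

lemma matProd_add {N : ℕ} (A : ℕ → Matrix (Fin N) (Fin N) ℝ) (i k : ℕ) :
    ∀ l, matProd A i (k + l) = matProd A (i + k) l * matProd A i k := by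
  intro l
  induction l with
  | zero => simp [matProd]
  | succ l ih =>
    show matProd A i (k + l + 1) = _
    rw [matProd, ih]
    show A (i + (k + l) + 1) * _ = matProd A (i+k) (l+1) * _
    rw [matProd, mul_assoc]
    ring_nf

/-- **N-SSS representation implies N-semiseparability.**
If the lower triangular matrix with entries `M_{j,i}` (positions `1,…,T`) satisfies
`M_{j,i} = c_jᵀ A^j ⋯ A^{i+1} b_i` for `1 ≤ i ≤ j ≤ T` and `M_{j,i} = 0` for `j < i`,
then every contiguous submatrix of `M` with rows `i₁,…,i₂` and columns `j₁,…,j₂`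
satisfying `j₂ ≤ i₁` (all entries on or below the diagonal) has rank at most `N`. -/
theorem nsss_implies_nss (T N : ℕ) (M : ℕ → ℕ → ℝ)
    (A : ℕ → Matrix (Fin N) (Fin N) ℝ) (b c : ℕ → Fin N → ℝ)
    (hM : ∀ i j, 1 ≤ i → i ≤ j → j ≤ T →
      M j i = c j ⬝ᵥ (matProd A i (j - i)).mulVec (b i))
    (hlow : ∀ i j, 1 ≤ j → j < i → i ≤ T → M j i = 0) :
    ∀ i₁ i₂ j₁ j₂ : ℕ, 1 ≤ j₁ → j₁ ≤ j₂ → j₂ ≤ i₁ → i₁ ≤ i₂ → i₂ ≤ T →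
      (Matrix.of fun (p : Fin (i₂ - i₁ + 1)) (q : Fin (j₂ - j₁ + 1)) =>
        M (i₁ + ↑p) (j₁ + ↑q)).rank ≤ N := by
  intro i₁ i₂ j₁ j₂ hj₁ hjj hji hii hiT
  set U : Matrix (Fin (i₂ - i₁ + 1)) (Fin N) ℝ :=
    Matrix.of fun p n => (c (i₁ + ↑p) ᵥ* matProd A i₁ ↑p) n with hU
  set V : Matrix (Fin N) (Fin (j₂ - j₁ + 1)) ℝ :=
    Matrix.of fun n q => ((matProd A (j₁ + ↑q) (i₁ - (j₁ + ↑q))) *ᵥ (b (j₁ + ↑q))) n with hV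
  have hEq : (Matrix.of fun (p : Fin (i₂ - i₁ + 1)) (q : Fin (j₂ - j₁ + 1)) =>
      M (i₁ + ↑p) (j₁ + ↑q)) = U * V := by
    ext p q
    have hp : (p : ℕ) ≤ i₂ - i₁ := Nat.lt_succ_iff.mp p.isLt
    have hq : (q : ℕ) ≤ j₂ - j₁ := Nat.lt_succ_iff.mp q.isLt
    have h1 : 1 ≤ j₁ + (q : ℕ) := le_trans hj₁ (Nat.le_add_right _ _)
    have h2 : j₁ + (q : ℕ) ≤ i₁ + (p : ℕ) := by omega
    have h3 : i₁ + (p : ℕ) ≤ T := by omega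
    have hsplit : (i₁ + (p : ℕ)) - (j₁ + (q : ℕ)) = (i₁ - (j₁ + (q : ℕ))) + (p : ℕ) := by
      omega
    have hbase : (j₁ + (q : ℕ)) + (i₁ - (j₁ + (q : ℕ))) = i₁ := by omega
    simp only [Matrix.of_apply, Matrix.mul_apply]
    rw [hM _ _ h1 h2 h3, hsplit, matProd_add, hbase, ← Matrix.mulVec_mulVec,
      Matrix.dotProduct_mulVec]
    rfl
  rw [hEq]
  calc (U * V).rank ≤ V.rank := Matrix.rank_mul_le_right U V
    _ ≤ N := by simpa using V.rank_le_card_height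
end

section
/- If a lower triangular matrix M ∈ ℝ^{T×T} is N-semiseparable, then M admits an N-SSS representation: there exist vectors b_1,…,b_T, c_1,…,c_T ∈ ℝ^N and matrices A^1,…,A^T ∈ ℝ^{N×N} such that M_{j,i} = c_jᵀ A^j A^{j-1} ⋯ A^{i+1} b_i for all 1 ≤ i ≤ j ≤ T. -/
open Matrix

lemma rank_factorization {m n N : ℕ} (H : Matrix (Fin m) (Fin n) ℝ) (h : H.rank ≤ N) :
    ∃ r : ℕ, r ≤ N ∧ ∃ (P : Matrix (Fin m) (Fin r) ℝ) (Q : Matrix (Fin r) (Fin n) ℝ),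
      H = P * Q ∧ ∀ x : Fin n → ℝ, H.mulVec x = 0 → Q.mulVec x = 0 := by
  classical
  set f := H.mulVecLin with hf
  set S := LinearMap.range f with hS
  set r := Module.finrank ℝ S with hr
  have hrN : r ≤ N := by rwa [Matrix.rank] at h
  let β : Module.Basis (Fin r) ℝ S := Module.finBasis ℝ S
  let q : (Fin n → ℝ) →ₗ[ℝ] (Fin r → ℝ) := β.equivFun.toLinearMap ∘ₗ f.rangeRestrict
  let p : (Fin r → ℝ) →ₗ[ℝ] (Fin m → ℝ) := S.subtype ∘ₗ β.equivFun.symm.toLinearMap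
  have hpq' : ∀ y, p (q y) = f y := by
    intro y
    simp only [p, q, LinearMap.comp_apply, LinearEquiv.coe_coe,
      LinearEquiv.symm_apply_apply, Submodule.coe_subtype]
    rfl
  have hpq : p ∘ₗ q = Matrix.toLin' H := by
    apply LinearMap.ext
    intro y
    rw [LinearMap.comp_apply, hpq', Matrix.toLin'_apply]
    rfl
  refine ⟨r, hrN, LinearMap.toMatrix' p, LinearMap.toMatrix' q, ?_, ?_⟩
  · rw [← LinearMap.toMatrix'_comp, hpq, LinearMap.toMatrix'_toLin']
  · intro x hx
    have hfx : f x = 0 := hx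
    have hq : q x = 0 := by
      have : f.rangeRestrict x = 0 := by
        apply Subtype.ext
        simpa using hfx
      simp [q, this]
    have : (LinearMap.toMatrix' q).mulVec x = q x := by
      rw [← Matrix.toLin'_apply, Matrix.toLin'_toMatrix']
    rw [this, hq]

lemma extend_linear {n N : ℕ} (f g : (Fin n → ℝ) →ₗ[ℝ] (Fin N → ℝ))
    (hker : LinearMap.ker f ≤ LinearMap.ker g) :
    ∃ A : Matrix (Fin N) (Fin N) ℝ, ∀ x, A.mulVec (f x) = g x := by
  obtain ⟨π, hπ⟩ := (LinearMap.range f).subtype.exists_leftInverse_of_injective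
      (Submodule.ker_subtype _)
  let h : (Fin N → ℝ) →ₗ[ℝ] (Fin N → ℝ) :=
    ((LinearMap.ker f).liftQ g hker) ∘ₗ (f.quotKerEquivRange).symm.toLinearMap ∘ₗ π
  refine ⟨LinearMap.toMatrix' h, fun x => ?_⟩
  have h1 : π (f x) = f.rangeRestrict x := by
    have := congrArg (fun φ => φ (f.rangeRestrict x)) hπ
    simpa using this
  have h2 : (f.quotKerEquivRange).symm (f.rangeRestrict x) = Submodule.Quotient.mk x := by
    rw [LinearEquiv.symm_apply_eq]
    apply Subtype.ext
    simp [LinearMap.quotKerEquivRange_apply_mk]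
  have h3 : (LinearMap.toMatrix' h).mulVec (f x) = h (f x) := by
    rw [← Matrix.toLin'_apply, Matrix.toLin'_toMatrix']
  rw [h3]
  show ((LinearMap.ker f).liftQ g hker) ((f.quotKerEquivRange).symm (π (f x))) = g x
  rw [h1, h2, Submodule.liftQ_apply]

lemma sum_fin_dite {r N : ℕ} (hr : r ≤ N) (G : Fin r → ℝ) :
    (∑ a : Fin N, if h : (a : ℕ) < r then G ⟨a, h⟩ else 0) = ∑ a : Fin r, G a := by
  have h1 : (∑ a : Fin N, if h : (a : ℕ) < r then G ⟨a, h⟩ else 0)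
      = ∑ a ∈ Finset.range N, (if h : a < r then G ⟨a, h⟩ else 0) :=
    Fin.sum_univ_eq_sum_range (fun a => if h : a < r then G ⟨a, h⟩ else 0) N
  have h2 : (∑ a ∈ Finset.range r, if h : a < r then G ⟨a, h⟩ else 0) = ∑ a : Fin r, G a := by
    rw [← Fin.sum_univ_eq_sum_range (fun a => if h : a < r then G ⟨a, h⟩ else 0) r]
    exact Finset.sum_congr rfl fun a _ => dif_pos a.isLt
  rw [h1, ← h2]
  refine (Finset.sum_subset (Finset.range_subset_range.2 hr) fun x _ hx => ?_).symm
  rw [Finset.mem_range] at hx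
  rw [dif_neg hx]

/-- **N-semiseparability implies N-SSS representability.**
If `M` (entries at positions `1,…,T`) is lower triangular and every contiguous submatrix
with rows `i₁,…,i₂` and columns `j₁,…,j₂` satisfying `j₂ ≤ i₁` has rank at most `N`,
then there exist `b_t, c_t ∈ ℝ^N` and `A^t ∈ ℝ^{N×N}` with
`M_{j,i} = c_jᵀ A^j ⋯ A^{i+1} b_i` for all `1 ≤ i ≤ j ≤ T`. -/
theorem nss_implies_nsss (T N : ℕ) (M : ℕ → ℕ → ℝ)
    (hlow : ∀ i j, 1 ≤ j → j < i → i ≤ T → M j i = 0)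
    (hss : ∀ i₁ i₂ j₁ j₂ : ℕ, 1 ≤ j₁ → j₁ ≤ j₂ → j₂ ≤ i₁ → i₁ ≤ i₂ → i₂ ≤ T →
      (Matrix.of fun (p : Fin (i₂ - i₁ + 1)) (q : Fin (j₂ - j₁ + 1)) =>
        M (i₁ + ↑p) (j₁ + ↑q)).rank ≤ N) :
    ∃ (b c : ℕ → Fin N → ℝ) (A : ℕ → Matrix (Fin N) (Fin N) ℝ),
      ∀ i j, 1 ≤ i → i ≤ j → j ≤ T →
        M j i = c j ⬝ᵥ (matProd A i (j - i)).mulVec (b i) := by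
  classical
  have key : ∀ t : ℕ,
      ∃ (A : ℕ → Matrix (Fin N) (Fin N) ℝ) (V : ℕ → ℕ → Fin N → ℝ),
        (∀ s, s ≤ t → ∀ j, s ≤ j → j ≤ T →
          ∃ w : Fin N → ℝ, ∀ i, 1 ≤ i → i ≤ s → M j i = w ⬝ᵥ V s i) ∧
        (∀ s, s < t → s + 1 ≤ T → ∀ i, 1 ≤ i → i ≤ s →
          V (s + 1) i = (A (s + 1)).mulVec (V s i)) := by
    intro t
    induction t with
    | zero =>
      exact ⟨fun _ => 0, fun _ _ => 0,
        fun s hs j _ _ => ⟨0, fun i h1 h2 => by omega⟩,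
        fun s hs => by omega⟩
    | succ t ih =>
      obtain ⟨A, V, hInv, hTr⟩ := ih
      by_cases hT : t + 1 ≤ T
      · -- main case
        have hrank := hss (t + 1) T 1 (t + 1) le_rfl (by omega) le_rfl hT le_rfl
        obtain ⟨r, hr, P, Q, hPQ, hker⟩ := rank_factorization _ hrank
        set QN : ℕ → ℕ → ℝ := fun a q' =>
          if h : a < r ∧ q' < t + 1 - 1 + 1 then Q ⟨a, h.1⟩ ⟨q', h.2⟩ else 0 with hQN
        set PN : ℕ → ℕ → ℝ := fun p' a =>
          if h : p' < T - (t + 1) + 1 ∧ a < r then P ⟨p', h.1⟩ ⟨a, h.2⟩ else 0 with hPN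
        set u : ℕ → Fin N → ℝ := fun i a => QN ↑a (i - 1) with huu
        have hdot : ∀ j i, t + 1 ≤ j → j ≤ T → 1 ≤ i → i ≤ t + 1 →
            M j i = (fun a : Fin N => PN (j - (t + 1)) ↑a) ⬝ᵥ u i := by
          intro j i hj1 hj2 hi1 hi2
          have hply : j - (t + 1) < T - (t + 1) + 1 := by omega
          have hqly : i - 1 < t + 1 - 1 + 1 := by omega
          have e1 : t + 1 + (j - (t + 1)) = j := by omega
          have e2 : 1 + (i - 1) = i := by omega
          have hentry : M j i = (P * Q) ⟨j - (t + 1), hply⟩ ⟨i - 1, hqly⟩ := by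
            rw [← hPQ]
            show M j i = M (t + 1 + (j - (t + 1))) (1 + (i - 1))
            rw [e1, e2]
          rw [hentry, Matrix.mul_apply]
          have hRHS : (fun a : Fin N => PN (j - (t + 1)) ↑a) ⬝ᵥ u i
              = ∑ a : Fin N, (if h : (a : ℕ) < r then
                  P ⟨j - (t + 1), hply⟩ ⟨↑a, h⟩ * Q ⟨↑a, h⟩ ⟨i - 1, hqly⟩ else 0) := by
            show (∑ a : Fin N, PN (j - (t + 1)) ↑a * u i a) = _
            refine Finset.sum_congr rfl fun a _ => ?_
            by_cases ha : (a : ℕ) < r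
            · simp only [hPN, hQN, huu]
              rw [dif_pos ⟨hply, ha⟩, dif_pos ⟨ha, hqly⟩, dif_pos ha]
            · simp only [hPN, hQN, huu]
              rw [dif_neg (by tauto), dif_neg (by tauto), dif_neg ha, mul_zero]
          rw [hRHS, sum_fin_dite hr (fun a => P ⟨j - (t + 1), hply⟩ a * Q a ⟨i - 1, hqly⟩)]
        set Vt : Matrix (Fin N) (Fin t) ℝ := Matrix.of fun a q' => V t (1 + ↑q') a with hVt
        set Ut : Matrix (Fin N) (Fin t) ℝ := Matrix.of fun a q' => u (1 + ↑q') a with hUt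
        have hkerVU : LinearMap.ker Vt.mulVecLin ≤ LinearMap.ker Ut.mulVecLin := by
          intro x hx
          rw [LinearMap.mem_ker, Matrix.mulVecLin_apply] at hx
          rw [LinearMap.mem_ker, Matrix.mulVecLin_apply]
          set xN : ℕ → ℝ := fun q' => if h : q' < t then x ⟨q', h⟩ else 0 with hxN
          set x' : Fin (t + 1 - 1 + 1) → ℝ := fun q' => xN ↑q' with hx'
          have hxNt : xN t = 0 := by rw [hxN]; simp
          have hHx : (Matrix.of fun (p : Fin (T - (t + 1) + 1)) (q : Fin (t + 1 - 1 + 1)) =>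
              M (t + 1 + ↑p) (1 + ↑q)).mulVec x' = 0 := by
            funext p
            obtain ⟨w, hw⟩ := hInv t le_rfl (t + 1 + ↑p) (by omega)
              (by have := p.isLt; omega)
            show (∑ q : Fin (t + 1 - 1 + 1), M (t + 1 + ↑p) (1 + ↑q) * xN ↑q) = 0
            have e1 : (∑ q : Fin (t + 1 - 1 + 1), M (t + 1 + ↑p) (1 + ↑q) * xN ↑q)
                = ∑ q' ∈ Finset.range (t + 1 - 1 + 1), M (t + 1 + ↑p) (1 + q') * xN q' :=
              Fin.sum_univ_eq_sum_range (fun q' => M (t + 1 + ↑p) (1 + q') * xN q') _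
            have e2 : t + 1 - 1 + 1 = t + 1 := by omega
            rw [e1, e2, Finset.sum_range_succ, hxNt, mul_zero, add_zero]
            have e4 : ∀ q' ∈ Finset.range t, M (t + 1 + ↑p) (1 + q') * xN q'
                = ∑ a : Fin N, w a * (V t (1 + q') a * xN q') := by
              intro q' hq'
              rw [Finset.mem_range] at hq'
              rw [hw (1 + q') (by omega) (by omega)]
              show (∑ a : Fin N, w a * V t (1 + q') a) * xN q' = _
              rw [Finset.sum_mul]
              exact Finset.sum_congr rfl fun a _ => by ring
            rw [Finset.sum_congr rfl e4, Finset.sum_comm]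
            refine Finset.sum_eq_zero fun a _ => ?_
            rw [← Finset.mul_sum]
            have e5 : (∑ q' ∈ Finset.range t, V t (1 + q') a * xN q') = 0 := by
              rw [← Fin.sum_univ_eq_sum_range (fun q' => V t (1 + q') a * xN q') t]
              have e7 : ∀ q : Fin t, V t (1 + ↑q) a * xN ↑q = Vt a q * x q := by
                intro q
                rw [hxN]
                simp only []
                rw [dif_pos q.isLt]
                rfl
              rw [Finset.sum_congr rfl fun q _ => e7 q]
              exact congrFun hx a
            rw [e5, mul_zero]
          have hQx := hker x' hHx
          funext a
          show (∑ q : Fin t, Ut a q * x q) = 0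
          by_cases ha : (a : ℕ) < r
          · have e8 : ∀ q : Fin t, Ut a q * x q = QN ↑a ↑q * xN ↑q := by
              intro q
              have : Ut a q = QN ↑a ↑q := by
                show QN ↑a (1 + ↑q - 1) = QN ↑a ↑q
                have hq1 : 1 + (q : ℕ) - 1 = (q : ℕ) := by omega
                rw [hq1]
              rw [this, hxN]
              simp only []
              rw [dif_pos q.isLt]
            rw [Finset.sum_congr rfl fun q _ => e8 q,
              Fin.sum_univ_eq_sum_range (fun q' => QN ↑a q' * xN q') t]
            have e9 : (∑ q' ∈ Finset.range t, QN ↑a q' * xN q')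
                = ∑ q' ∈ Finset.range (t + 1), QN ↑a q' * xN q' := by
              rw [Finset.sum_range_succ, hxNt, mul_zero, add_zero]
            rw [e9]
            have e10 : (∑ q : Fin (t + 1 - 1 + 1), Q ⟨↑a, ha⟩ q * x' q)
                = ∑ q' ∈ Finset.range (t + 1 - 1 + 1), QN ↑a q' * xN q' := by
              rw [← Fin.sum_univ_eq_sum_range (fun q' => QN ↑a q' * xN q') (t + 1 - 1 + 1)]
              refine Finset.sum_congr rfl fun q _ => ?_
              congr 1
              rw [hQN]
              simp only []
              rw [dif_pos ⟨ha, q.isLt⟩]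
            have e2 : t + 1 - 1 + 1 = t + 1 := by omega
            have e2' : Finset.range (t + 1 - 1 + 1) = Finset.range (t + 1) := by rw [e2]
            rw [← e2', ← e10]
            exact congrFun hQx ⟨↑a, ha⟩
          · refine Finset.sum_eq_zero fun q _ => ?_
            have : Ut a q = 0 := by
              show u (1 + ↑q) a = 0
              rw [huu]
              simp only []
              rw [hQN]
              simp only []
              rw [dif_neg (by tauto)]
            rw [this, zero_mul]
        obtain ⟨A', hA'⟩ := extend_linear Vt.mulVecLin Ut.mulVecLin hkerVU
        have hstep : ∀ i, 1 ≤ i → i ≤ t → A'.mulVec (V t i) = u i := by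
          intro i hi1 hi2
          have h := hA' (Pi.single (⟨i - 1, by omega⟩ : Fin t) 1)
          rw [Matrix.mulVecLin_apply, Matrix.mulVecLin_apply, Matrix.mulVec_single,
            Matrix.mulVec_single] at h
          have e2 : 1 + (i - 1) = i := by omega
          have eV : (fun a => Vt a ⟨i - 1, by omega⟩ * 1) = V t i := by
            funext a
            rw [mul_one]
            show V t (1 + (i - 1)) a = V t i a
            rw [e2]
          have eU : (fun a => Ut a ⟨i - 1, by omega⟩ * 1) = u i := by
            funext a
            rw [mul_one]
            show u (1 + (i - 1)) a = u i a
            rw [e2]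
          simp only [MulOpposite.op_one, one_smul] at h
          rw [← eV, ← eU]
          have hv : (fun a => Vt a ⟨i - 1, by omega⟩ * 1) = Vt.col ⟨i - 1, by omega⟩ := by
            funext a; simp [Matrix.col]
          have hu : (fun a => Ut a ⟨i - 1, by omega⟩ * 1) = Ut.col ⟨i - 1, by omega⟩ := by
            funext a; simp [Matrix.col]
          rw [hv, hu]
          exact h
        refine ⟨Function.update A (t + 1) A',
          Function.update V (t + 1)
            (fun i => if i = t + 1 then u (t + 1) else A'.mulVec (V t i)), ?_, ?_⟩
        · intro s hs j hsj hjT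
          rcases Nat.lt_or_ge s (t + 1) with hst | hst
          · rw [Function.update_of_ne (by omega)]
            exact hInv s (by omega) j hsj hjT
          · have hs' : s = t + 1 := by omega
            subst hs'
            rw [Function.update_self]
            refine ⟨fun a => PN (j - (t + 1)) ↑a, fun i hi1 hi2 => ?_⟩
            have hVi : (if i = t + 1 then u (t + 1) else A'.mulVec (V t i)) = u i := by
              by_cases hit : i = t + 1
              · rw [if_pos hit, hit]
              · rw [if_neg hit]
                exact hstep i hi1 (by omega)
            show M j i = _ ⬝ᵥ (if i = t + 1 then u (t + 1) else A'.mulVec (V t i))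
            rw [hVi]
            exact hdot j i hsj hjT hi1 hi2
        · intro s hs hsT i hi1 his
          rcases Nat.lt_or_ge s t with hst | hst
          · rw [Function.update_of_ne (by omega : s + 1 ≠ t + 1),
              Function.update_of_ne (by omega : s + 1 ≠ t + 1),
              Function.update_of_ne (by omega : s ≠ t + 1)]
            exact hTr s hst hsT i hi1 his
          · have hs' : s = t := by omega
            rw [hs']
            rw [Function.update_self, Function.update_self,
              Function.update_of_ne (by omega : t ≠ t + 1)]
            show (if i = t + 1 then u (t + 1) else A'.mulVec (V t i)) = A'.mulVec (V t i)
            rw [if_neg (by omega)]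
      · refine ⟨A, V, ?_, ?_⟩
        · intro s hs j hsj hjT
          rcases Nat.lt_or_ge s (t + 1) with hst | hst
          · exact hInv s (by omega) j hsj hjT
          · omega
        · intro s hs hsT i hi1 his
          exact hTr s (by omega) hsT i hi1 his
  obtain ⟨A, V, hInv, hTr⟩ := key T
  have chain : ∀ i k, 1 ≤ i → i + k ≤ T → (matProd A i k).mulVec (V i i) = V (i + k) i := by
    intro i k hi1
    induction k with
    | zero => intro _; simp [matProd, Matrix.one_mulVec]
    | succ k ih =>
      intro h
      show (A (i + k + 1) * matProd A i k).mulVec (V i i) = V (i + k + 1) i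
      rw [← Matrix.mulVec_mulVec, ih (by omega)]
      exact (hTr (i + k) (by omega) (by omega) i hi1 (by omega)).symm
  refine ⟨fun i => V i i,
    fun j => if h : j ≤ T then Classical.choose (hInv j h j le_rfl h) else 0, A, ?_⟩
  intro i j hi1 hij hjT
  simp only [dif_pos hjT]
  have hspec := Classical.choose_spec (hInv j hjT j le_rfl hjT) i hi1 hij
  rw [hspec]
  have hj : i + (j - i) = j := by omega
  rw [chain i (j - i) hi1 (by omega), hj]
end

section
/- Fine 1-SS masked attention characterization: let M ∈ ℝ^{T×T} be an N-semiseparable lower triangular matrix. Then there exist Q, K ∈ ℝ^{T×N} and a vector a ∈ ℝ^T with a_1 a_2 ⋯ a_T ≠ 0 such that M = 1SS(a) ⊙ (Q Kᵀ) if and only if M has at most N new columns. -/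
open Matrix

/-- Column `t` (with `1 ≤ t ≤ T`) of a lower triangular matrix `M` (entries at positions
`1,…,T`) is a *new column* if the vector `(M_{t,t}, M_{t+1,t}, …, M_{T,t})` does not lie in
the span of the columns of the submatrix of `M` with rows `t,…,T` and columns `1,…,t-1`. -/
def IsNewCol (T : ℕ) (M : ℕ → ℕ → ℝ) (t : ℕ) : Prop :=
  (fun p : Fin (T - t + 1) => M (t + ↑p) t) ∉
    Submodule.span ℝ
      (Set.range fun s : Fin (t - 1) => fun p : Fin (T - t + 1) => M (t + ↑p) (↑s + 1))

lemma oneSS_split (a : ℕ → ℝ) {s c r : ℕ} (h1 : s ≤ c) (h2 : c ≤ r) :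
    oneSS a r s = oneSS a r c * oneSS a c s := by
  simp only [oneSS, if_pos (h1.trans h2), if_pos h2, if_pos h1]
  rw [mul_comm, Finset.prod_Ioc_consecutive a h1 h2]

lemma oneSS_ne_zero {T : ℕ} (a : ℕ → ℝ) (ha : ∀ k, 1 ≤ k → k ≤ T → a k ≠ 0)
    {s c : ℕ} (hs1 : 1 ≤ s) (hsc : s ≤ c) (hcT : c ≤ T) : oneSS a c s ≠ 0 := by
  simp only [oneSS, if_pos hsc]
  refine Finset.prod_ne_zero_iff.mpr fun k hk => ?_
  rw [Finset.mem_Ioc] at hk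
  exact ha k (by omega) (by omega)

/-- Forward key lemma: if `K c` is in the span of earlier `K` rows, then column `c`
is not a new column. -/
lemma not_new_of_mem_span (T N : ℕ) (M : ℕ → ℕ → ℝ) (Q K : ℕ → Fin N → ℝ) (a : ℕ → ℝ)
    (ha : ∀ k, 1 ≤ k → k ≤ T → a k ≠ 0)
    (hM : ∀ i j, 1 ≤ i → i ≤ T → 1 ≤ j → j ≤ T →
      M j i = oneSS a j i * ∑ n : Fin N, Q j n * K i n)
    (c : ℕ) (h1 : 1 ≤ c) (h2 : c ≤ T) (G : Finset ℕ)
    (hG : ∀ s ∈ G, 1 ≤ s ∧ s < c)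
    (hmem : K c ∈ Submodule.span ℝ (K '' ↑G)) : ¬ IsNewCol T M c := by
  intro hnew
  apply hnew
  rw [Set.image_eq_range] at hmem
  obtain ⟨f, hf⟩ := (Submodule.mem_span_range_iff_exists_fun ℝ).mp hmem
  have key : (fun p : Fin (T - c + 1) => M (c + ↑p) c)
      = ∑ s : ↥G, (f s / oneSS a c ↑s) •
          (fun p : Fin (T - c + 1) => M (c + ↑p) ↑s) := by
    funext p
    have hp : (p : ℕ) ≤ T - c := Nat.lt_succ_iff.mp p.2
    have hcp1 : 1 ≤ c + ↑p := by omega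
    have hcp2 : c + ↑p ≤ T := by omega
    rw [Finset.sum_apply]
    have hKc : ∀ n, K c n = ∑ s : ↥G, f s * K (↑s) n := by
      intro n
      have h := congrFun hf n
      rw [Finset.sum_apply] at h
      simp only [Pi.smul_apply, smul_eq_mul] at h
      exact h.symm
    rw [hM c (c + ↑p) h1 h2 hcp1 hcp2]
    have hswap : ∑ n : Fin N, Q (c + ↑p) n * K c n
        = ∑ s : ↥G, f s * ∑ n : Fin N, Q (c + ↑p) n * K (↑s) n := by
      simp_rw [hKc, Finset.mul_sum]
      rw [Finset.sum_comm]
      refine Finset.sum_congr rfl fun s _ => ?_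
      refine Finset.sum_congr rfl fun n _ => ?_
      ring
    rw [hswap, Finset.mul_sum]
    refine Finset.sum_congr rfl fun s _ => ?_
    obtain ⟨hs1, hs2⟩ := hG ↑s s.2
    have hMs : M (c + ↑p) ↑s
        = oneSS a (c + ↑p) c * oneSS a c ↑s * ∑ n : Fin N, Q (c + ↑p) n * K (↑s) n := by
      rw [hM ↑s (c + ↑p) hs1 (by omega) hcp1 hcp2, oneSS_split a hs2.le (by omega)]
    have hne : oneSS a c ↑s ≠ 0 := oneSS_ne_zero a ha hs1 hs2.le h2
    rw [Pi.smul_apply, smul_eq_mul, hMs]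
    field_simp
  rw [key]
  refine Submodule.sum_mem _ fun s _ => Submodule.smul_mem _ _ (Submodule.subset_span ?_)
  obtain ⟨hs1, hs2⟩ := hG ↑s s.2
  refine ⟨⟨(↑s : ℕ) - 1, by omega⟩, ?_⟩
  have hss : (↑s : ℕ) - 1 + 1 = ↑s := by omega
  simp only [hss]

/-- Reverse key lemma: every column's tail is a combination of the tails of new columns. -/
lemma exists_coeffs (T : ℕ) (M : ℕ → ℕ → ℝ) (F : Finset ℕ)
    (hF : ∀ t, 1 ≤ t → t ≤ T → IsNewCol T M t → t ∈ F)
    (t : ℕ) (h1 : 1 ≤ t) (h2 : t ≤ T) :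
    ∃ c : ℕ → ℝ, (∀ s, c s ≠ 0 → s ∈ F ∧ 1 ≤ s ∧ s ≤ t) ∧
      ∀ r, t ≤ r → r ≤ T → M r t = ∑ s ∈ F, c s * M r s := by
  revert h1 h2
  induction t using Nat.strong_induction_on with
  | _ t IH =>
  intro h1 h2
  by_cases hnew : IsNewCol T M t
  · refine ⟨fun s => if s = t then 1 else 0, ?_, ?_⟩
    · intro s hs
      by_cases h : s = t
      · subst h; exact ⟨hF s h1 h2 hnew, h1, le_refl _⟩
      · simp [h] at hs
    · intro r _ _
      simp only [ite_mul, one_mul, zero_mul]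
      rw [Finset.sum_ite_eq' F t (fun s => M r s), if_pos (hF t h1 h2 hnew)]
  · rw [IsNewCol, not_not] at hnew
    obtain ⟨μ, hμ⟩ := (Submodule.mem_span_range_iff_exists_fun ℝ).mp hnew
    choose cc hcc1 hcc2 using fun s : Fin (t - 1) =>
      IH (↑s + 1) (by omega) (by omega) (by omega)
    refine ⟨fun u => ∑ s : Fin (t - 1), μ s * cc s u, ?_, ?_⟩
    · intro u hu
      obtain ⟨s, -, hs⟩ := Finset.exists_ne_zero_of_sum_ne_zero hu
      have hcs : cc s u ≠ 0 := by
        intro h0; exact hs (by rw [h0, mul_zero])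
      obtain ⟨hu1, hu2, hu3⟩ := hcc1 s u hcs
      exact ⟨hu1, hu2, by omega⟩
    · intro r hr1 hr2
      have hpt : M r t = ∑ s : Fin (t - 1), μ s * M r (↑s + 1) := by
        have h := congrFun hμ ⟨r - t, by omega⟩
        rw [Finset.sum_apply] at h
        simp only [Pi.smul_apply, smul_eq_mul] at h
        have hrt : t + ((⟨r - t, by omega⟩ : Fin (T - t + 1)) : ℕ) = r := by
          simp only []; omega
        rw [hrt] at h
        exact h.symm
      rw [hpt]
      calc ∑ s : Fin (t - 1), μ s * M r (↑s + 1)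
          = ∑ s : Fin (t - 1), ∑ u ∈ F, μ s * (cc s u * M r u) := by
            refine Finset.sum_congr rfl fun s _ => ?_
            rw [hcc2 s r (by omega) hr2, Finset.mul_sum]
        _ = ∑ u ∈ F, (∑ s : Fin (t - 1), μ s * cc s u) * M r u := by
            rw [Finset.sum_comm]
            refine Finset.sum_congr rfl fun u _ => ?_
            rw [Finset.sum_mul]
            exact Finset.sum_congr rfl fun s _ => (mul_assoc _ _ _).symm

/-- **fine 1-SS masked attention characterization.**
Let `M` be an `N`-semiseparable lower triangular matrix.  Then `M = 1SS(a) ⊙ (Q Kᵀ)` for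
some `Q, K ∈ ℝ^{T×N}` and some `a ∈ ℝ^T` with `a_1 a_2 ⋯ a_T ≠ 0` if and only if `M` has
at most `N` new columns. -/
theorem fine_oneSS_masked_attention_iff (T N : ℕ) (M : ℕ → ℕ → ℝ)
    (hlow : ∀ i j, 1 ≤ j → j < i → i ≤ T → M j i = 0)
    (hss : ∀ i₁ i₂ j₁ j₂ : ℕ, 1 ≤ j₁ → j₁ ≤ j₂ → j₂ ≤ i₁ → i₁ ≤ i₂ → i₂ ≤ T →
      (Matrix.of fun (p : Fin (i₂ - i₁ + 1)) (q : Fin (j₂ - j₁ + 1)) =>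
        M (i₁ + ↑p) (j₁ + ↑q)).rank ≤ N) :
    (∃ (Q K : ℕ → Fin N → ℝ) (a : ℕ → ℝ),
        (∏ t ∈ Finset.Icc 1 T, a t) ≠ 0 ∧
        ∀ i j, 1 ≤ i → i ≤ T → 1 ≤ j → j ≤ T →
          M j i = oneSS a j i * ∑ n : Fin N, Q j n * K i n) ↔
      {t : ℕ | 1 ≤ t ∧ t ≤ T ∧ IsNewCol T M t}.ncard ≤ N := by
  classical
  set F : Finset ℕ := (Finset.Icc 1 T).filter (fun t => IsNewCol T M t) with hFdef
  have hset : {t : ℕ | 1 ≤ t ∧ t ≤ T ∧ IsNewCol T M t} = ↑F := by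
    ext t
    simp [hFdef, Finset.mem_filter, Finset.mem_Icc, and_assoc]
  rw [hset, Set.ncard_coe_finset]
  constructor
  · rintro ⟨Q, K, a, ha, hM⟩
    have haK : ∀ k, 1 ≤ k → k ≤ T → a k ≠ 0 := fun k hk1 hk2 =>
      Finset.prod_ne_zero_iff.mp ha k (Finset.mem_Icc.mpr ⟨hk1, hk2⟩)
    have main : ∀ t : ℕ, (F.filter (· ≤ t)).card ≤
        Module.finrank ℝ (Submodule.span ℝ (K '' ↑(F.filter (· ≤ t)))) := by
      intro t
      induction t with
      | zero =>
        have h0 : F.filter (· ≤ 0) = ∅ := by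
          rw [Finset.filter_eq_empty_iff]
          intro x hx
          have hx1 : 1 ≤ x := (Finset.mem_Icc.mp (Finset.mem_filter.mp hx).1).1
          omega
        rw [h0]
        simp
      | succ t iht =>
        by_cases hc : t + 1 ∈ F
        · have hmemF := Finset.mem_filter.mp hc
          have hb := Finset.mem_Icc.mp hmemF.1
          have heq : F.filter (· ≤ t + 1) = insert (t + 1) (F.filter (· ≤ t)) := by
            ext x
            simp only [Finset.mem_insert, Finset.mem_filter]
            constructor
            · rintro ⟨hx, hle⟩
              rcases Nat.lt_or_ge x (t + 1) with h | h
              · exact Or.inr ⟨hx, by omega⟩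
              · exact Or.inl (by omega)
            · rintro (rfl | ⟨hx, hle⟩)
              · exact ⟨hc, le_refl _⟩
              · exact ⟨hx, by omega⟩
          have hnotmem : t + 1 ∉ F.filter (· ≤ t) := by
            intro hmem
            have := (Finset.mem_filter.mp hmem).2
            omega
          have hKnot : K (t + 1) ∉ Submodule.span ℝ (K '' ↑(F.filter (· ≤ t))) := by
            intro hmem
            refine not_new_of_mem_span T N M Q K a haK hM (t + 1) hb.1 hb.2
              (F.filter (· ≤ t)) (fun s hs => ?_) hmem hmemF.2
            have hs' := Finset.mem_filter.mp hs
            have hs1 := Finset.mem_Icc.mp (Finset.mem_filter.mp hs'.1).1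
            exact ⟨hs1.1, by omega⟩
          have hlt : Submodule.span ℝ (K '' ↑(F.filter (· ≤ t)))
              < Submodule.span ℝ (K '' ↑(F.filter (· ≤ t + 1))) := by
            refine lt_of_le_of_ne (Submodule.span_mono (Set.image_mono ?_)) ?_
            · intro x hx
              simp only [Finset.coe_filter, Set.mem_setOf_eq] at hx ⊢
              exact ⟨hx.1, by omega⟩
            · intro hspan
              apply hKnot
              rw [hspan]
              refine Submodule.subset_span ⟨t + 1, ?_, rfl⟩
              rw [heq]
              simp
          have hrank := Submodule.finrank_lt_finrank_of_lt hlt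
          rw [heq] at hrank
          rw [heq, Finset.card_insert_of_notMem hnotmem]
          omega
        · have heq : F.filter (· ≤ t + 1) = F.filter (· ≤ t) := by
            ext x
            simp only [Finset.mem_filter]
            constructor
            · rintro ⟨hx, hle⟩
              refine ⟨hx, ?_⟩
              rcases Nat.lt_or_ge x (t + 1) with h | h
              · omega
              · exfalso; apply hc; have : x = t + 1 := by omega
                rwa [this] at hx
            · rintro ⟨hx, hle⟩; exact ⟨hx, by omega⟩
          rw [heq]
          exact iht
    have hFT : F.filter (· ≤ T) = F := by
      apply Finset.filter_true_of_mem
      intro x hx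
      exact (Finset.mem_Icc.mp (Finset.mem_filter.mp hx).1).2
    have hfin := main T
    rw [hFT] at hfin
    refine hfin.trans ?_
    have hle := Submodule.finrank_le (Submodule.span ℝ (K '' ↑F))
    rwa [Module.finrank_fintype_fun_eq_card, Fintype.card_fin] at hle
  · intro h
    have hA := exists_coeffs T M F (fun u hu1 hu2 hun =>
      Finset.mem_filter.mpr ⟨Finset.mem_Icc.mpr ⟨hu1, hu2⟩, hun⟩)
    choose! c hc1 hc2 using hA
    let φ := F.orderIsoOfFin rfl
    let f : ℕ → ℕ := fun x => if hx : x < F.card then ((φ ⟨x, hx⟩ : ℕ)) else 0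
    refine ⟨fun j n => M j (f ↑n), fun i n => c i (f ↑n), fun _ => 1, by simp, ?_⟩
    intro i j hi1 hi2 hj1 hj2
    by_cases hij : i ≤ j
    · have hone : oneSS (fun _ => 1) j i = 1 := by simp [oneSS, hij]
      rw [hone, one_mul]
      have hc0 : c i 0 = 0 := by
        by_contra h0
        have := (hc1 i hi1 hi2 0 h0).2.1
        omega
      have hsum : ∑ n : Fin N, M j (f ↑n) * c i (f ↑n) = ∑ s ∈ F, c i s * M j s := by
        rw [Fin.sum_univ_eq_sum_range (fun x => M j (f x) * c i (f x)) N]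
        rw [← Finset.sum_subset (Finset.range_subset_range.mpr h)
          (fun x _ hx => ?_)]
        · rw [← Fin.sum_univ_eq_sum_range (fun x => M j (f x) * c i (f x)) F.card]
          have hstep : ∀ k : Fin F.card, M j (f ↑k) * c i (f ↑k)
              = M j ↑(φ k) * c i ↑(φ k) := by
            intro k
            have : f ↑k = ↑(φ k) := by
              simp only [f, dif_pos k.2]
            rw [this]
          rw [Finset.sum_congr rfl (fun k _ => hstep k)]
          calc ∑ k : Fin F.card, M j ↑(φ k) * c i ↑(φ k)
              = ∑ s : ↥F, M j ↑s * c i ↑s :=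
                Equiv.sum_comp φ.toEquiv (fun s : ↥F => M j ↑s * c i ↑s)
            _ = ∑ s ∈ F, c i s * M j s := by
                rw [Finset.sum_coe_sort F (fun s => M j s * c i s)]
                exact Finset.sum_congr rfl fun s _ => mul_comm _ _
        · have hfx : f x = 0 := by
            simp only [f]
            rw [dif_neg]
            rw [Finset.mem_range] at hx
            omega
          rw [hfx, hc0, mul_zero]
      rw [hsum]
      exact hc2 i hi1 hi2 j hij hj2
    · have h0 : M j i = 0 := hlow i j hj1 (by omega) hi2
      have hz : oneSS (fun _ => 1) j i = 0 := by
        simp only [oneSS, if_neg hij]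
      rw [h0, hz, zero_mul]
end

section
/- Let M ∈ ℝ^{T×T} be lower triangular, and suppose its new columns occur at indices t_1 < t_2 < … < t_m. Let W ∈ ℝ^{T×T} be any matrix agreeing with M on and below the diagonal, i.e., W_{j,i} = M_{j,i} for all 1 ≤ i ≤ j ≤ T. Then the columns W_{:,t_1}, W_{:,t_2}, …, W_{:,t_m} of W are linearly independent; in particular rank(W) is at least the number of new columns of M. -/
open Matrix

/-- Let `M` be lower triangular with new columns at indices
`t_1 < t_2 < … < t_m`, and let `W` be any matrix agreeing with `M` on and below the
diagonal.  Then the columns `W_{:,t_1}, …, W_{:,t_m}` are linearly independent;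
in particular `rank W ≥ m`, the number of new columns of `M`. -/
theorem new_columns_linearIndependent (T : ℕ) (M W : ℕ → ℕ → ℝ)
    (hlow : ∀ i j, 1 ≤ j → j < i → i ≤ T → M j i = 0)
    (hW : ∀ i j, 1 ≤ i → i ≤ j → j ≤ T → W j i = M j i)
    (m : ℕ) (t : Fin m → ℕ) (hmono : StrictMono t)
    (ht : ∀ r : Fin m, 1 ≤ t r ∧ t r ≤ T ∧ IsNewCol T M (t r)) :
    LinearIndependent ℝ (fun r : Fin m => fun p : Fin T => W (↑p + 1) (t r)) ∧
      m ≤ (Matrix.of fun (p q : Fin T) => W (↑p + 1) (↑q + 1)).rank := by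
  classical
  have hli : LinearIndependent ℝ (fun r : Fin m => fun p : Fin T => W (↑p + 1) (t r)) := by
    rw [Fintype.linearIndependent_iff]
    intro g hg
    by_contra hcon
    push_neg at hcon
    obtain ⟨r₁, hr₁⟩ := hcon
    set s : Finset (Fin m) := Finset.univ.filter (fun r => g r ≠ 0) with hs
    have hsne : s.Nonempty := ⟨r₁, by simp [hs, hr₁]⟩
    set r₀ := s.max' hsne with hr₀
    have hgr₀ : g r₀ ≠ 0 := by
      have := s.max'_mem hsne
      simpa [hs] using this
    have hgt : ∀ r, r₀ < r → g r = 0 := by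
      intro r hr
      by_contra h
      exact absurd (s.le_max' r (by simp [hs, h])) (not_le.mpr hr)
    obtain ⟨h1, h2, h3⟩ := ht r₀
    set t₀ := t r₀ with ht₀
    -- the key pointwise identity
    have key : ∀ p : Fin (T - t₀ + 1),
        M (t₀ + ↑p) t₀ =
          ∑ r ∈ Finset.univ.filter (fun r => r < r₀),
            (-(g r / g r₀)) * M (t₀ + ↑p) (t r) := by
      intro p
      have hple : (p : ℕ) ≤ T - t₀ := Nat.lt_succ_iff.mp p.isLt
      set j : ℕ := t₀ + ↑p with hj
      have hj1 : 1 ≤ j := by omega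
      have hjT : j ≤ T := by omega
      have hgeval := congrFun hg ⟨j - 1, by omega⟩
      simp only [Finset.sum_apply, Pi.smul_apply, smul_eq_mul, Pi.zero_apply] at hgeval
      rw [Nat.sub_add_cancel hj1] at hgeval
      -- replace W by M in each term of the sum
      have hterm : ∀ r : Fin m, g r * W j (t r) = g r * M j (t r) := by
        intro r
        rcases eq_or_ne (g r) 0 with h | h
        · simp [h]
        · have hrle : r ≤ r₀ := s.le_max' r (by simp [hs, h])
          have htle : t r ≤ t₀ := hmono.monotone hrle
          have := (ht r).1
          rw [hW (t r) j this (le_trans htle (by omega)) hjT]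
      have hgeval' : ∑ r : Fin m, g r * M j (t r) = 0 := by
        rw [← hgeval]
        apply Finset.sum_congr rfl
        intro r _
        exact (hterm r).symm
      -- split the sum
      rw [← Finset.sum_filter_add_sum_filter_not Finset.univ (fun r => r < r₀)] at hgeval'
      have hsingle : ∑ r ∈ Finset.univ.filter (fun r => ¬ r < r₀), g r * M j (t r)
          = g r₀ * M j t₀ := by
        apply Finset.sum_eq_single_of_mem r₀ (by simp)
        intro r hr hne
        simp only [Finset.mem_filter, not_lt] at hr
        have : r₀ < r := lt_of_le_of_ne hr.2 (Ne.symm hne)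
        simp [hgt r this]
      rw [hsingle] at hgeval'
      have : M j t₀ = (-(1 / g r₀)) * ∑ r ∈ Finset.univ.filter (fun r => r < r₀),
          g r * M j (t r) := by
        field_simp
        linarith [hgeval']
      rw [this, Finset.mul_sum]
      apply Finset.sum_congr rfl
      intro r _
      field_simp
    -- derive membership contradicting IsNewCol
    apply h3
    have heq : (fun p : Fin (T - t₀ + 1) => M (t₀ + ↑p) t₀) =
        ∑ r ∈ Finset.univ.filter (fun r => r < r₀),
          (-(g r / g r₀)) • (fun p : Fin (T - t₀ + 1) => M (t₀ + ↑p) (t r)) := by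
      funext p
      simp only [Finset.sum_apply, Pi.smul_apply, smul_eq_mul]
      exact key p
    rw [heq]
    apply Submodule.sum_mem
    intro r hr
    apply Submodule.smul_mem
    apply Submodule.subset_span
    have hrlt : r < r₀ := by simpa using hr
    have h1r := (ht r).1
    have htlt : t r < t₀ := hmono hrlt
    refine ⟨⟨t r - 1, by omega⟩, ?_⟩
    funext p
    simp only
    congr 1
    omega
  refine ⟨hli, ?_⟩
  -- rank bound
  set A : Matrix (Fin T) (Fin T) ℝ := Matrix.of fun (p q : Fin T) => W (↑p + 1) (↑q + 1) with hA
  rw [Matrix.rank_eq_finrank_span_cols]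
  have hsub : Submodule.span ℝ (Set.range (fun r : Fin m => fun p : Fin T => W (↑p + 1) (t r)))
      ≤ Submodule.span ℝ (Set.range Aᵀ) := by
    apply Submodule.span_le.mpr
    rintro _ ⟨r, rfl⟩
    apply Submodule.subset_span
    have h1r := (ht r).1
    have h2r := (ht r).2.1
    refine ⟨⟨t r - 1, by omega⟩, ?_⟩
    funext p
    simp only [Matrix.transpose_apply, hA, Matrix.of_apply]
    congr 1
    omega
  have := Submodule.finrank_mono hsub
  rwa [finrank_span_eq_card hli, Fintype.card_fin] at this
end

section
/- Let M ∈ ℝ^{T×T} be a lower triangular matrix with at most N new columns. Then there exists a matrix W ∈ ℝ^{T×T} with rank(W) ≤ N such that W_{j,i} = M_{j,i} for all 1 ≤ i ≤ j ≤ T; equivalently, there exist Q, K ∈ ℝ^{T×N} such that M = L₁ ⊙ (Q Kᵀ), where L₁ is the lower triangular all-ones matrix (L₁)_{t,s} = 1 for t ≥ s and 0 otherwise. -/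
open Matrix

noncomputable def coefW (T : ℕ) (M : ℕ → ℕ → ℝ) (q : ℕ) (h : ¬ IsNewCol T M (q+1)) :
    Fin q → ℝ :=
  ((Submodule.mem_span_range_iff_exists_fun ℝ).mp (not_not.mp h)).choose

theorem coefW_spec (T : ℕ) (M : ℕ → ℕ → ℝ) (q : ℕ) (h : ¬ IsNewCol T M (q+1)) :
    ∑ s : Fin q, coefW T M q h s •
        (fun p : Fin (T - (q+1) + 1) => M ((q+1) + ↑p) (↑s + 1)) =
      fun p : Fin (T - (q+1) + 1) => M ((q+1) + ↑p) (q+1) :=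
  ((Submodule.mem_span_range_iff_exists_fun ℝ).mp (not_not.mp h)).choose_spec

open Classical in
noncomputable def wcol (T : ℕ) (M : ℕ → ℕ → ℝ) : (q : ℕ) → Fin T → ℝ := fun q =>
  if h : IsNewCol T M (q+1) then (fun p => M (↑p + 1) (q+1))
  else ∑ s : Fin q, coefW T M q h s • wcol T M ↑s
termination_by q => q
decreasing_by exact s.isLt

theorem wcol_agree (T : ℕ) (M : ℕ → ℕ → ℝ) :
    ∀ q : ℕ, ∀ p : Fin T, q ≤ ↑p → wcol T M q p = M (↑p + 1) (q + 1) := by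
  intro q
  induction q using Nat.strong_induction_on with
  | _ q IH =>
    intro p hqp
    rw [wcol]
    by_cases h : IsNewCol T M (q+1)
    · rw [dif_pos h]
    · rw [dif_neg h]
      have hpT : (↑p : ℕ) < T := p.isLt
      have hj : (↑p : ℕ) - q < T - (q+1) + 1 := by omega
      have hspec := congrFun (coefW_spec T M q h) ⟨↑p - q, hj⟩
      simp only [Finset.sum_apply, Pi.smul_apply, smul_eq_mul] at hspec ⊢
      have hidx : (q + 1) + ((↑p : ℕ) - q) = ↑p + 1 := by omega
      rw [hidx] at hspec
      rw [← hspec]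
      refine Finset.sum_congr rfl fun s _ => ?_
      rw [IH ↑s s.isLt p (by omega)]

theorem wcol_mem_span (T : ℕ) (M : ℕ → ℕ → ℝ) :
    ∀ q : ℕ, q < T →
      wcol T M q ∈ Submodule.span ℝ
        (Set.range fun r : {r : Fin T // IsNewCol T M (↑r + 1)} => wcol T M ↑↑r) := by
  intro q
  induction q using Nat.strong_induction_on with
  | _ q IH =>
    intro hqT
    rw [wcol]
    by_cases h : IsNewCol T M (q+1)
    · rw [dif_pos h]
      apply Submodule.subset_span
      refine ⟨⟨⟨q, hqT⟩, h⟩, ?_⟩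
      show wcol T M q = _
      rw [wcol, dif_pos h]
    · rw [dif_neg h]
      exact Submodule.sum_mem _ fun s _ =>
        Submodule.smul_mem _ _ (IH ↑s s.isLt (lt_trans s.isLt hqT))

/-- If a lower triangular matrix `M` has at most `N` new columns, then
there is a matrix `W` of rank at most `N` agreeing with `M` on and below the diagonal;
equivalently, there are `Q, K ∈ ℝ^{T×N}` with `M = L₁ ⊙ (Q Kᵀ)`, where `L₁` is the lower
triangular all-ones mask. -/
theorem few_new_columns_low_rank_completion (T N : ℕ) (M : ℕ → ℕ → ℝ)
    (hlow : ∀ i j, 1 ≤ j → j < i → i ≤ T → M j i = 0)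
    (hnew : {t : ℕ | 1 ≤ t ∧ t ≤ T ∧ IsNewCol T M t}.ncard ≤ N) :
    (∃ W : ℕ → ℕ → ℝ,
        (Matrix.of fun (p q : Fin T) => W (↑p + 1) (↑q + 1)).rank ≤ N ∧
        ∀ i j, 1 ≤ i → i ≤ j → j ≤ T → W j i = M j i) ∧
      (∃ Q K : ℕ → Fin N → ℝ,
        ∀ i j, 1 ≤ i → i ≤ T → 1 ≤ j → j ≤ T →
          M j i = (if i ≤ j then (1 : ℝ) else 0) * ∑ n : Fin N, Q j n * K i n) := by
  classical
  -- cardinality of the set of new columns, as a subtype of `Fin T`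
  have hinj : Function.Injective (fun r : Fin T => (↑r : ℕ) + 1) := by
    intro a b hab
    have hab' : (↑a : ℕ) + 1 = ↑b + 1 := hab
    exact Fin.ext (by omega)
  have himg : {t : ℕ | 1 ≤ t ∧ t ≤ T ∧ IsNewCol T M t} =
      (fun r : Fin T => (↑r : ℕ) + 1) '' {r : Fin T | IsNewCol T M (↑r + 1)} := by
    ext t
    simp only [Set.mem_setOf_eq, Set.mem_image]
    constructor
    · rintro ⟨h1, h2, h3⟩
      refine ⟨⟨t - 1, by omega⟩, ?_, by show t - 1 + 1 = t; omega⟩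
      show IsNewCol T M (t - 1 + 1)
      rw [show t - 1 + 1 = t by omega]
      exact h3
    · rintro ⟨r, hr, rfl⟩
      exact ⟨by omega, by have := r.isLt; omega, hr⟩
  have hcard : Fintype.card {r : Fin T // IsNewCol T M (↑r + 1)} ≤ N := by
    rw [himg, Set.ncard_image_of_injective _ hinj] at hnew
    rwa [show Fintype.card {r : Fin T // IsNewCol T M (↑r + 1)} =
        ({r : Fin T | IsNewCol T M (↑r + 1)} : Set (Fin T)).ncard by
      rw [← Nat.card_coe_set_eq]
      exact Nat.card_eq_fintype_card.symm]
  obtain ⟨g⟩ : Nonempty ({r : Fin T // IsNewCol T M (↑r + 1)} ↪ Fin N) :=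
    Function.Embedding.nonempty_of_card_le (by simpa using hcard)
  -- coefficients expressing each column over the new columns
  choose c hc using fun q : Fin T =>
    (Submodule.mem_span_range_iff_exists_fun ℝ).mp (wcol_mem_span T M ↑q q.isLt)
  constructor
  · -- the low-rank completion W
    refine ⟨fun j i => if h : 1 ≤ j ∧ j ≤ T ∧ 1 ≤ i ∧ i ≤ T then
        wcol T M (i - 1) ⟨j - 1, by omega⟩ else 0, ?_, ?_⟩
    · have key : ∀ A : Matrix (Fin T) (Fin T) ℝ,
          A = (Matrix.of fun (p : Fin T) (r : {r : Fin T // IsNewCol T M (↑r + 1)}) =>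
                wcol T M ↑↑r p) *
              (Matrix.of fun (r : {r : Fin T // IsNewCol T M (↑r + 1)}) (q : Fin T) =>
                c q r) → A.rank ≤ N := by
        intro A hA
        rw [hA]
        exact le_trans (Matrix.rank_mul_le_left _ _)
          (le_trans (Matrix.rank_le_card_width _) hcard)
      apply key
      ext p q
      have hp := p.isLt
      have hq := q.isLt
      rw [Matrix.mul_apply]
      simp only [Matrix.of_apply]
      rw [dif_pos ⟨by omega, by omega, by omega, by omega⟩]
      have e2 : (⟨↑p + 1 - 1, by omega⟩ : Fin T) = p := Fin.ext (by show (↑p : ℕ) + 1 - 1 = ↑p; omega)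
      rw [e2]
      show wcol T M (↑q + 1 - 1) p = _
      rw [show (↑q : ℕ) + 1 - 1 = ↑q by omega]
      rw [← hc q, Finset.sum_apply]
      exact Finset.sum_congr rfl fun r _ => by
        simp only [Pi.smul_apply, smul_eq_mul]; ring
    · intro i j h1 h2 h3
      show (if h : 1 ≤ j ∧ j ≤ T ∧ 1 ≤ i ∧ i ≤ T then
          wcol T M (i - 1) ⟨j - 1, by omega⟩ else 0) = M j i
      rw [dif_pos ⟨by omega, h3, h1, by omega⟩]
      rw [wcol_agree T M (i - 1) ⟨j - 1, by omega⟩ (by show i - 1 ≤ j - 1; omega)]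
      rw [show ((⟨j - 1, by omega⟩ : Fin T) : ℕ) = j - 1 from rfl]
      congr 1 <;> omega
  · -- the Q, K factorization
    refine ⟨fun j n => if h : 1 ≤ j ∧ j ≤ T then
        ∑ r : {r : Fin T // IsNewCol T M (↑r + 1)},
          (if g r = n then wcol T M ↑↑r ⟨j - 1, by omega⟩ else 0) else 0,
      fun i n => if h : 1 ≤ i ∧ i ≤ T then
        ∑ r : {r : Fin T // IsNewCol T M (↑r + 1)},
          (if g r = n then c ⟨i - 1, by omega⟩ r else 0) else 0, ?_⟩
    intro i j h1 h2 h3 h4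
    by_cases hij : i ≤ j
    · rw [if_pos hij, one_mul]
      have hp : j - 1 < T := by omega
      have hq : i - 1 < T := by omega
      have hM : M j i = wcol T M (i - 1) ⟨j - 1, hp⟩ := by
        rw [wcol_agree T M (i - 1) ⟨j - 1, hp⟩ (by show i - 1 ≤ j - 1; omega)]
        rw [show ((⟨j - 1, hp⟩ : Fin T) : ℕ) = j - 1 from rfl]
        congr 1 <;> omega
      rw [hM]
      have hval : wcol T M (i - 1) ⟨j - 1, hp⟩ =
          ∑ r : {r : Fin T // IsNewCol T M (↑r + 1)},
            c ⟨i - 1, hq⟩ r * wcol T M ↑↑r ⟨j - 1, hp⟩ := by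
        have := congrFun (hc ⟨i - 1, hq⟩) ⟨j - 1, hp⟩
        simp only [Finset.sum_apply, Pi.smul_apply, smul_eq_mul] at this
        exact this.symm
      rw [hval]
      symm
      calc ∑ n : Fin N,
            (if h : 1 ≤ j ∧ j ≤ T then
              ∑ r : {r : Fin T // IsNewCol T M (↑r + 1)},
                (if g r = n then wcol T M ↑↑r ⟨j - 1, by omega⟩ else 0) else 0) *
            (if h : 1 ≤ i ∧ i ≤ T then
              ∑ r : {r : Fin T // IsNewCol T M (↑r + 1)},
                (if g r = n then c ⟨i - 1, by omega⟩ r else 0) else 0)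
          = ∑ n : Fin N, ∑ r : {r : Fin T // IsNewCol T M (↑r + 1)},
              ∑ r' : {r : Fin T // IsNewCol T M (↑r + 1)},
                (if g r = n ∧ g r' = n then
                  wcol T M ↑↑r ⟨j - 1, hp⟩ * c ⟨i - 1, hq⟩ r' else 0) := by
            refine Finset.sum_congr rfl fun n _ => ?_
            rw [dif_pos ⟨h3, h4⟩, dif_pos ⟨h1, h2⟩, Finset.sum_mul_sum]
            exact Finset.sum_congr rfl fun r _ => Finset.sum_congr rfl fun r' _ =>
              ite_zero_mul_ite_zero ..
        _ = ∑ r : {r : Fin T // IsNewCol T M (↑r + 1)},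
              ∑ r' : {r : Fin T // IsNewCol T M (↑r + 1)},
                ∑ n : Fin N,
                (if g r = n ∧ g r' = n then
                  wcol T M ↑↑r ⟨j - 1, hp⟩ * c ⟨i - 1, hq⟩ r' else 0) := by
            rw [Finset.sum_comm]
            exact Finset.sum_congr rfl fun r _ => Finset.sum_comm
        _ = ∑ r : {r : Fin T // IsNewCol T M (↑r + 1)},
              ∑ r' : {r : Fin T // IsNewCol T M (↑r + 1)},
                (if r = r' then
                  wcol T M ↑↑r ⟨j - 1, hp⟩ * c ⟨i - 1, hq⟩ r' else 0) := by
            refine Finset.sum_congr rfl fun r _ => Finset.sum_congr rfl fun r' _ => ?_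
            by_cases h : r = r'
            · subst h
              simp
            · rw [if_neg h]
              apply Finset.sum_eq_zero
              intro n _
              rw [if_neg]
              rintro ⟨e1, e2⟩
              exact h (g.injective (e1.trans e2.symm))
        _ = ∑ r : {r : Fin T // IsNewCol T M (↑r + 1)},
              c ⟨i - 1, hq⟩ r * wcol T M ↑↑r ⟨j - 1, hp⟩ := by
            refine Finset.sum_congr rfl fun r _ => ?_
            rw [Finset.sum_ite_eq]
            simp [mul_comm]
    · rw [if_neg hij, zero_mul]
      exact hlow i j h3 (by omega) h2
end

section
/- Impossibility of 1-SS masked attention duals for low state dimension: for T ≥ 3, let M = I_T + E^{T,1} ∈ ℝ^{T×T}, where E^{T,1} has entry 1 in position (T,1) and zeros elsewhere. Then M is 2-semiseparable, but for every N ≤ T−2 there exist no Q, K ∈ ℝ^{T×N} and no a ∈ ℝ^T such that M = 1SS(a) ⊙ (Q Kᵀ). -/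
open Matrix

/-- **impossibility of 1-SS masked attention duals for low state dimension.**
For `T ≥ 3`, let `M = I_T + E^{T,1}` (entry `1` at position `(T,1)` added to the identity).
Then `M` is `2`-semiseparable, but for every `N ≤ T − 2` there are no `Q, K ∈ ℝ^{T×N}` and
no `a ∈ ℝ^T` with `M = 1SS(a) ⊙ (Q Kᵀ)`. -/
theorem no_oneSS_masked_attention_dual (T : ℕ) (hT : 3 ≤ T) (M : ℕ → ℕ → ℝ)
    (hM : ∀ i j, 1 ≤ i → i ≤ T → 1 ≤ j → j ≤ T →
      M j i = (if i = j then (1 : ℝ) else 0) + (if j = T ∧ i = 1 then (1 : ℝ) else 0)) :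
    (∀ i₁ i₂ j₁ j₂ : ℕ, 1 ≤ j₁ → j₁ ≤ j₂ → j₂ ≤ i₁ → i₁ ≤ i₂ → i₂ ≤ T →
      (Matrix.of fun (p : Fin (i₂ - i₁ + 1)) (q : Fin (j₂ - j₁ + 1)) =>
        M (i₁ + ↑p) (j₁ + ↑q)).rank ≤ 2) ∧
    (∀ N : ℕ, N ≤ T - 2 →
      ¬ ∃ (Q K : ℕ → Fin N → ℝ) (a : ℕ → ℝ),
        ∀ i j, 1 ≤ i → i ≤ T → 1 ≤ j → j ≤ T →
          M j i = oneSS a j i * ∑ n : Fin N, Q j n * K i n) := by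
  constructor
  · -- 2-semiseparability
    intro i₁ i₂ j₁ j₂ hj₁ hj12 hji hi12 hi₂
    set X : Matrix (Fin (i₂ - i₁ + 1)) (Fin 2) ℝ :=
      Matrix.of fun p => ![(if i₁ + (p : ℕ) = j₂ then (1 : ℝ) else 0),
        (if i₁ + (p : ℕ) = T then (1 : ℝ) else 0)] with hX
    set Y : Matrix (Fin 2) (Fin (j₂ - j₁ + 1)) ℝ :=
      Matrix.of ![(fun q => if j₁ + (q : ℕ) = j₂ then (1 : ℝ) else 0),
        (fun q => if j₁ + (q : ℕ) = 1 then (1 : ℝ) else 0)] with hY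
    have hfact : (Matrix.of fun (p : Fin (i₂ - i₁ + 1)) (q : Fin (j₂ - j₁ + 1)) =>
        M (i₁ + ↑p) (j₁ + ↑q)) = X * Y := by
      ext p q
      have hp : (p : ℕ) ≤ i₂ - i₁ := Nat.lt_succ_iff.mp p.isLt
      have hq : (q : ℕ) ≤ j₂ - j₁ := Nat.lt_succ_iff.mp q.isLt
      have hMe := hM (j₁ + (q : ℕ)) (i₁ + (p : ℕ)) (by omega) (by omega) (by omega) (by omega)
      simp only [Matrix.of_apply, Matrix.mul_apply, Fin.sum_univ_two, hX, hY,
        Matrix.cons_val_zero, Matrix.cons_val_one, Matrix.head_cons]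
      rw [hMe, show (if i₁ + (p : ℕ) = T ∧ j₁ + (q : ℕ) = 1 then (1 : ℝ) else 0)
          = (if i₁ + (p : ℕ) = T then (1 : ℝ) else 0) *
            (if j₁ + (q : ℕ) = 1 then (1 : ℝ) else 0) from by
        by_cases hC : i₁ + (p : ℕ) = T <;> by_cases hD : j₁ + (q : ℕ) = 1 <;>
          simp [hC, hD]]
      split_ifs <;> (try norm_num) <;> omega
    rw [hfact]
    exact (Matrix.rank_mul_le_left X Y).trans
      ((Matrix.rank_le_card_width X).trans (by simp))
  · -- impossibility
    rintro N hN ⟨Q, K, a, h⟩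
    set P : ℕ → ℕ → ℝ := fun j i => ∑ n : Fin N, Q j n * K i n with hPdef
    have hdiag : ∀ i, 1 ≤ i → i ≤ T → P i i = 1 := by
      intro i h1 h2
      have hh := h i i h1 h2 h1 h2
      rw [hM i i h1 h2 h1 h2] at hh
      have hne : ¬ (i = T ∧ i = 1) := by omega
      simp only [if_pos rfl, if_neg hne, add_zero] at hh
      have hone : oneSS a i i = 1 := by simp [oneSS]
      rw [hone, one_mul] at hh
      exact hh.symm
    have hT1 : oneSS a T 1 * P T 1 = 1 := by
      have hh := h 1 T (le_refl 1) (by omega) (by omega) (le_refl T)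
      rw [hM 1 T (le_refl 1) (by omega) (by omega) (le_refl T)] at hh
      have hne : (1 : ℕ) ≠ T := by omega
      rw [if_neg hne, if_pos ⟨rfl, rfl⟩, zero_add] at hh
      exact hh.symm
    have hane : ∀ k ∈ Finset.Ioc 1 T, a k ≠ 0 := by
      have hss : oneSS a T 1 ≠ 0 := fun h0 => by simp [h0] at hT1
      rw [oneSS, if_pos (by omega : 1 ≤ T)] at hss
      exact Finset.prod_ne_zero_iff.mp hss
    have hzero : ∀ i j, 1 ≤ i → i < j → j ≤ T → ¬(j = T ∧ i = 1) → P j i = 0 := by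
      intro i j h1 hij hjT hne
      have hh := h i j h1 (by omega) (by omega) hjT
      rw [hM i j h1 (by omega) (by omega) hjT] at hh
      have hne2 : i ≠ j := by omega
      rw [if_neg hne2, if_neg hne, add_zero] at hh
      have hss : oneSS a j i ≠ 0 := by
        rw [oneSS, if_pos (le_of_lt hij)]
        refine Finset.prod_ne_zero_iff.mpr fun k hk => ?_
        have hk' := Finset.mem_Ioc.mp hk
        exact hane k (Finset.mem_Ioc.mpr ⟨by omega, by omega⟩)
      rcases mul_eq_zero.mp hh.symm with h0 | h0
      · exact absurd h0 hss
      · exact h0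
    -- the T-1 vectors K_1, …, K_{T-1} are linearly dependent in ℝ^N
    have hdep : ¬ LinearIndependent ℝ (fun i : Fin (T - 1) => fun n => K ((i : ℕ) + 1) n) := by
      intro hli
      have hc := hli.fintype_card_le_finrank
      rw [Module.finrank_fintype_fun_eq_card] at hc
      simp only [Fintype.card_fin] at hc
      omega
    obtain ⟨g, hsum, i₀, hg₀⟩ := Fintype.not_linearIndependent_iff.mp hdep
    have heval : ∀ j, 1 ≤ j → j ≤ T →
        ∑ i : Fin (T - 1), g i * P j ((i : ℕ) + 1) = 0 := by
      intro j h1 h2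
      have hcalc : ∑ i : Fin (T - 1), g i * P j ((i : ℕ) + 1)
          = ∑ n : Fin N, Q j n * (∑ i : Fin (T - 1), g i * K ((i : ℕ) + 1) n) := by
        simp only [hPdef]
        calc ∑ i : Fin (T - 1), g i * ∑ n : Fin N, Q j n * K ((i : ℕ) + 1) n
            = ∑ i : Fin (T - 1), ∑ n : Fin N, Q j n * (g i * K ((i : ℕ) + 1) n) := by
              refine Finset.sum_congr rfl fun i _ => ?_
              rw [Finset.mul_sum]
              exact Finset.sum_congr rfl fun n _ => by ring
          _ = ∑ n : Fin N, ∑ i : Fin (T - 1), Q j n * (g i * K ((i : ℕ) + 1) n) :=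
              Finset.sum_comm
          _ = ∑ n : Fin N, Q j n * ∑ i : Fin (T - 1), g i * K ((i : ℕ) + 1) n := by
              refine Finset.sum_congr rfl fun n _ => ?_
              rw [Finset.mul_sum]
      rw [hcalc]
      refine Finset.sum_eq_zero fun n _ => ?_
      have hz := congrFun hsum n
      simp only [Finset.sum_apply, Pi.smul_apply, smul_eq_mul, Pi.zero_apply] at hz
      rw [hz, mul_zero]
    have step : ∀ i : Fin (T - 1), (∀ i' : Fin (T - 1), (i : ℕ) < (i' : ℕ) → g i' = 0) →
        g i = 0 := by
      intro i hup
      have hiT : (i : ℕ) < T - 1 := i.isLt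
      have hE := heval ((i : ℕ) + 1) (by omega) (by omega)
      rw [Finset.sum_eq_single i] at hE
      · rw [hdiag ((i : ℕ) + 1) (by omega) (by omega), mul_one] at hE
        exact hE
      · intro b _ hbne
        rcases lt_or_gt_of_ne (fun hc : (b : ℕ) = (i : ℕ) => hbne (Fin.ext hc)) with hlt | hgt
        · rw [hzero ((b : ℕ) + 1) ((i : ℕ) + 1) (by omega) (by omega) (by omega)
            (by omega), mul_zero]
        · rw [hup b hgt, zero_mul]
      · intro hni; exact absurd (Finset.mem_univ i) hni
    have key : ∀ k, ∀ i : Fin (T - 1), T - 2 ≤ (i : ℕ) + k → g i = 0 := by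
      intro k
      induction k with
      | zero =>
        intro i hi
        exact step i fun i' hlt => by have := i'.isLt; omega
      | succ k ih =>
        intro i hi
        by_cases hc : T - 2 ≤ (i : ℕ) + k
        · exact ih i hc
        · exact step i fun i' hlt => ih i' (by omega)
    exact hg₀ (key T i₀ (by omega))
end

section
/- Rank explosion under softmax: for T ≥ 1, let V ∈ ℝ^{T×T} have entries V_{i,j} = i·j for i, j ∈ {1,…,T}, and let S = Softmax(V) be its row-wise softmax, i.e., S_{i,j} = exp(i·j) / Σ_{k=1}^{T} exp(i·k). Then V has rank at most 1, while S is invertible (rank(S) = T). -/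
open Matrix

/-- **rank explosion under softmax.**
For `T ≥ 1`, let `V ∈ ℝ^{T×T}` have entries `V_{i,j} = i·j` (with `1`-based indices) and let
`S = Softmax(V)` be its row-wise softmax, `S_{i,j} = exp(i·j) / Σ_{k=1}^{T} exp(i·k)`.
Then `V` has rank at most `1`, while `S` is invertible, i.e. `rank S = T`. -/
theorem softmax_rank_explosion (T : ℕ) (hT : 1 ≤ T)
    (V S : Matrix (Fin T) (Fin T) ℝ)
    (hV : ∀ i j : Fin T, V i j = ((↑i + 1 : ℕ) * (↑j + 1 : ℕ) : ℕ))
    (hS : ∀ i j : Fin T, S i j = Real.exp (V i j) / ∑ k : Fin T, Real.exp (V i k)) :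
    V.rank ≤ 1 ∧ IsUnit S ∧ S.rank = T := by
  -- rank V ≤ 1
  have hVfact : V = (Matrix.of fun (i : Fin T) (_ : Fin 1) => ((i : ℕ) + 1 : ℝ)) *
      (Matrix.of fun (_ : Fin 1) (j : Fin T) => ((j : ℕ) + 1 : ℝ)) := by
    ext i j
    simp [Matrix.mul_apply, hV i j]
  have hrankV : V.rank ≤ 1 := by
    rw [hVfact]
    calc _ ≤ (Matrix.of fun (i : Fin T) (_ : Fin 1) => ((i : ℕ) + 1 : ℝ)).rank :=
          Matrix.rank_mul_le_left _ _
      _ ≤ Fintype.card (Fin 1) := Matrix.rank_le_card_width _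
      _ = 1 := by simp
  -- S factorization
  set x : Fin T → ℝ := fun i => Real.exp ((i : ℕ) + 1) with hx
  set r : Fin T → ℝ := fun i => ∑ k : Fin T, Real.exp (V i k) with hr
  have hrpos : ∀ i, 0 < r i := fun i =>
    Finset.sum_pos (fun k _ => Real.exp_pos _) ⟨⟨0, hT⟩, Finset.mem_univ _⟩
  have hSfact : S = Matrix.diagonal (fun i => x i / r i) * Matrix.vandermonde x := by
    ext i j
    rw [Matrix.diagonal_mul, Matrix.vandermonde_apply, hS i j]
    have key : Real.exp (V i j) = x i * x i ^ (j : ℕ) := by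
      rw [hV, hx]
      dsimp only
      rw [← Real.exp_nat_mul, ← Real.exp_add]
      congr 1
      push_cast
      ring
    rw [key]
    show _ = x i / (∑ k : Fin T, Real.exp (V i k)) * x i ^ (j : ℕ)
    ring
  have hxinj : Function.Injective x := by
    intro a b hab
    simp only [hx, Real.exp_eq_exp] at hab
    exact Fin.ext (Nat.cast_injective (R := ℝ) (add_right_cancel hab))
  have hdet : S.det ≠ 0 := by
    rw [hSfact, Matrix.det_mul, Matrix.det_diagonal]
    refine mul_ne_zero (Finset.prod_ne_zero_iff.mpr fun i _ =>
      div_ne_zero (Real.exp_ne_zero _) (hrpos i).ne') ?_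
    exact Matrix.det_vandermonde_ne_zero_iff.mpr hxinj
  have hUnit : IsUnit S := (Matrix.isUnit_iff_isUnit_det S).mpr hdet.isUnit
  refine ⟨hrankV, hUnit, ?_⟩
  rw [Matrix.rank_of_isUnit S hUnit]
  simp
end

section
/- Every square submatrix of the softmax of the rank-one matrix V_{i,j} = i·j is invertible: for T ≥ 1, let S ∈ ℝ^{T×T} have entries S_{i,j} = exp(i·j) / Σ_{k=1}^{T} exp(i·k). Then for every m ≥ 1 and all index sequences 1 ≤ i_1 < i_2 < … < i_m ≤ T and 1 ≤ j_1 < j_2 < … < j_m ≤ T, the m×m submatrix (S_{i_r, j_s})_{r,s=1}^{m} is invertible. -/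
open Matrix

/-- Descartes-type lemma: if a "sparse polynomial" with `m` terms (strictly
increasing natural exponents) vanishes at `m` distinct positive points, then
all of its coefficients are zero. Proved by induction using Rolle's theorem. -/
lemma descartes_key : ∀ m : ℕ, ∀ (a : Fin m → ℕ) (c : Fin m → ℝ) (z : Fin m → ℝ),
    StrictMono a → StrictMono z → (∀ s, 0 < z s) →
    (∀ s, ∑ r, c r * z s ^ (a r) = 0) → ∀ r, c r = 0 := by
  intro m
  induction m with
  | zero => intro _ _ _ _ _ _ _ r; exact r.elim0
  | succ m ih =>
    intro a c z ha hz hzpos hsum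
    set n : Fin (m+1) → ℕ := fun r => a r - a 0 with hn
    set f : ℝ → ℝ := fun x => ∑ r, c r * x ^ (n r) with hf
    set f' : ℝ → ℝ := fun x => ∑ r, c r * ((n r : ℝ) * x ^ (n r - 1)) with hf'
    have ha0 : ∀ r, a 0 ≤ a r := fun r => ha.monotone (Fin.zero_le r)
    have hfz : ∀ s, f (z s) = 0 := by
      intro s
      have hz0 : z s ≠ 0 := ne_of_gt (hzpos s)
      have hkey : f (z s) * z s ^ (a 0) = 0 := by
        rw [hf]
        simp only [Finset.sum_mul]
        rw [← hsum s]
        apply Finset.sum_congr rfl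
        intro r _
        rw [mul_assoc, ← pow_add]
        congr 2
        have h1 : n r = a r - a 0 := rfl
        have h2 := ha0 r
        omega
      rcases mul_eq_zero.mp hkey with h | h
      · exact h
      · exact absurd h (pow_ne_zero _ hz0)
    have hderiv : ∀ x : ℝ, HasDerivAt f (f' x) x := by
      intro x
      apply HasDerivAt.fun_sum
      intro r _
      exact (hasDerivAt_pow (n r) x).const_mul (c r)
    have hcont : Continuous f := by
      apply continuous_finset_sum
      intro r _
      exact continuous_const.mul (continuous_pow (n r))
    have hroll : ∀ s : Fin m, ∃ w ∈ Set.Ioo (z s.castSucc) (z s.succ), f' w = 0 := by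
      intro s
      apply exists_hasDerivAt_eq_zero (hz (Fin.castSucc_lt_succ : s.castSucc < s.succ))
        hcont.continuousOn ((hfz _).trans (hfz _).symm)
      intro x _
      exact hderiv x
    choose w hw hw0 using hroll
    have hwmono : StrictMono w := by
      intro s t hst
      have h1 : w s < z s.succ := (hw s).2
      have h2 : z t.castSucc < w t := (hw t).1
      have h3 : z s.succ ≤ z t.castSucc := by
        apply hz.monotone
        have hst' : (s : ℕ) + 1 ≤ (t : ℕ) := hst
        simp [Fin.le_def]
        omega
      linarith
    have hwpos : ∀ s, 0 < w s := fun s => (hzpos _).trans (hw s).1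
    have hapos : ∀ r : Fin m, a 0 < a r.succ := fun r => ha (Fin.succ_pos r)
    have ha' : StrictMono (fun r : Fin m => a r.succ - a 0 - 1) := by
      intro r t hrt
      have h1 : a r.succ < a t.succ := ha (Fin.succ_lt_succ_iff.mpr hrt)
      have h2 := hapos r
      simp only
      omega
    have hsum' : ∀ s : Fin m,
        ∑ r : Fin m, (c r.succ * (n r.succ : ℝ)) * w s ^ (a r.succ - a 0 - 1) = 0 := by
      intro s
      have h0 : ∑ r : Fin (m+1), c r * ((n r : ℝ) * w s ^ (n r - 1)) = 0 := hw0 s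
      rw [Fin.sum_univ_succ] at h0
      have hn0 : n 0 = 0 := by simp [hn]
      rw [hn0] at h0
      simp only [Nat.cast_zero, zero_mul, mul_zero, zero_add] at h0
      calc ∑ r : Fin m, (c r.succ * (n r.succ : ℝ)) * w s ^ (a r.succ - a 0 - 1)
          = ∑ r : Fin m, c r.succ * ((n r.succ : ℝ) * w s ^ (n r.succ - 1)) := by
            apply Finset.sum_congr rfl
            intro r _
            rw [mul_assoc]
        _ = 0 := h0
    have hcz : ∀ r : Fin m, c r.succ * (n r.succ : ℝ) = 0 :=
      ih _ _ w ha' hwmono hwpos hsum'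
    have hcsucc : ∀ r : Fin m, c r.succ = 0 := by
      intro r
      have hne : (n r.succ : ℝ) ≠ 0 := by
        apply Nat.cast_ne_zero.mpr
        have := hapos r
        simp [hn]
        omega
      exact (mul_eq_zero.mp (hcz r)).resolve_right hne
    have hc0 : c 0 = 0 := by
      have h : ∑ r : Fin (m+1), c r * z 0 ^ (n r) = 0 := hfz 0
      rw [Fin.sum_univ_succ] at h
      have hn0 : n 0 = 0 := Nat.sub_self (a 0)
      simpa [hn0, hcsucc] using h
    intro r
    exact Fin.cases hc0 hcsucc r

/-- **every square submatrix of the softmax matrix is invertible.**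
For `T ≥ 1`, let `S ∈ ℝ^{T×T}` have entries
`S_{i,j} = exp(i·j) / Σ_{k=1}^{T} exp(i·k)` (with `1`-based indices).
Then for every `m ≥ 1` and all strictly increasing index sequences
`i_1 < … < i_m` and `j_1 < … < j_m`, the `m×m` submatrix `(S_{i_r, j_s})` is invertible. -/
theorem softmax_all_submatrices_invertible (T : ℕ) (hT : 1 ≤ T)
    (S : Matrix (Fin T) (Fin T) ℝ)
    (hS : ∀ i j : Fin T,
      S i j = Real.exp (((↑i + 1 : ℕ) * (↑j + 1 : ℕ) : ℕ)) /
        ∑ k : Fin T, Real.exp (((↑i + 1 : ℕ) * (↑k + 1 : ℕ) : ℕ))) :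
    ∀ (m : ℕ), 1 ≤ m → ∀ (idx jdx : Fin m → Fin T), StrictMono idx → StrictMono jdx →
      IsUnit (Matrix.of fun (r s : Fin m) => S (idx r) (jdx s)) := by
  intro m hm idx jdx hidx hjdx
  have hT' : Nonempty (Fin T) := ⟨⟨0, hT⟩⟩
  have hZ : ∀ i : Fin T,
      0 < ∑ k : Fin T, Real.exp (((↑i + 1 : ℕ) * (↑k + 1 : ℕ) : ℕ)) := by
    intro i
    apply Finset.sum_pos
    · intro k _
      exact Real.exp_pos _
    · exact Finset.univ_nonempty
  rw [Matrix.isUnit_iff_isUnit_det, isUnit_iff_ne_zero]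
  intro hdet
  obtain ⟨v, hv, hvN⟩ := Matrix.exists_vecMul_eq_zero_iff.mpr hdet
  set a : Fin m → ℕ := fun r => (idx r : ℕ) + 1 with haa
  set z : Fin m → ℝ := fun s => Real.exp ((((jdx s : ℕ) + 1 : ℕ) : ℝ)) with hzz
  set c : Fin m → ℝ := fun r =>
    v r / (∑ k : Fin T, Real.exp ((((idx r : ℕ) + 1 : ℕ) * ((k : ℕ) + 1 : ℕ) : ℕ))) with hcc
  have hzexp : ∀ r s, z s ^ (a r) =
      Real.exp ((((idx r : ℕ) + 1 : ℕ) * ((jdx s : ℕ) + 1 : ℕ) : ℕ)) := by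
    intro r s
    rw [hzz]
    simp only
    rw [← Real.exp_nat_mul]
    congr 1
    simp only [haa]
    push_cast
    ring
  have hsum : ∀ s, ∑ r, c r * z s ^ (a r) = 0 := by
    intro s
    have h := congrFun hvN s
    simp only [Matrix.vecMul, dotProduct, Pi.zero_apply, Matrix.of_apply] at h
    rw [← h]
    apply Finset.sum_congr rfl
    intro r _
    rw [hS, hzexp]
    rw [hcc]
    simp only
    ring
  have hamono : StrictMono a := by
    intro r t hrt
    have := hidx hrt
    simp only [haa]
    omega
  have hzmono : StrictMono z := by
    intro s t hst
    have h1 : jdx s < jdx t := hjdx hst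
    apply Real.exp_lt_exp.mpr
    have h2 : (jdx s : ℕ) < (jdx t : ℕ) := h1
    have h3 : ((jdx s : ℕ) + 1 : ℕ) < ((jdx t : ℕ) + 1 : ℕ) := by omega
    exact_mod_cast h3
  have hzpos : ∀ s, 0 < z s := fun s => Real.exp_pos _
  have hc := descartes_key m a c z hamono hzmono hzpos hsum
  apply hv
  funext r
  have := hc r
  rw [hcc] at this
  simp only at this
  have hZr := hZ (idx r)
  have := (div_eq_zero_iff.mp this).resolve_right (ne_of_gt hZr)
  exact this
end

section
/- Correctness of the diagonal SSD algorithm: define f : ℝ^T × ℝ^{T×d} → ℝ^{T×d} by f(x,Y)_{t,s} = x_t · Y_{t,s}, and define g : ℝ^T × ℝ^{T×d} → ℝ^{T×d} recursively by g(x,Y)_{1,:} = Y_{1,:} and g(x,Y)_{t+1,:} = x_{t+1} · g(x,Y)_{t,:} + Y_{t+1,:} for t = 1,…,T−1. Let M ∈ ℝ^{T×T} be lower triangular with M_{j,i} = c_jᵀ A^j A^{j-1} ⋯ A^{i+1} b_i for 1 ≤ i ≤ j ≤ T, where b_1,…,b_T, c_1,…,c_T ∈ ℝ^N and each A^t ∈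 ℝ^{N×N} is diagonal. For n ∈ {1,…,N}, set aⁿ = (A^1_{n,n},…,A^T_{n,n}) ∈ ℝ^T and let bⁿ, cⁿ ∈ ℝ^T be given by bⁿ_t = (b_t)_n and cⁿ_t = (c_t)_n. Then for every X ∈ ℝ^{T×d}, Σ_{n=1}^{N} f(cⁿ, g(aⁿ, f(bⁿ, X))) = M · X. -/
open Matrix

/-- The map `f : ℝ^T × ℝ^{T×d} → ℝ^{T×d}`, `f(x,Y)_{t,s} = x_t · Y_{t,s}`
(rows indexed by positions `1,…,T`). -/
def fOp {d : ℕ} (x : ℕ → ℝ) (Y : ℕ → Fin d → ℝ) : ℕ → Fin d → ℝ :=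
  fun t => x t • Y t

/-- The map `g : ℝ^T × ℝ^{T×d} → ℝ^{T×d}` defined recursively by `g(x,Y)_{1,:} = Y_{1,:}` and
`g(x,Y)_{t+1,:} = x_{t+1} · g(x,Y)_{t,:} + Y_{t+1,:}` (rows indexed by positions `1,…,T`;
row `0` is set to `0`, which makes the `t = 0` recursion step produce `g(x,Y)_{1,:} = Y_{1,:}`). -/
def gOp {d : ℕ} (x : ℕ → ℝ) (Y : ℕ → Fin d → ℝ) : ℕ → Fin d → ℝ
  | 0 => 0
  | t + 1 => x (t + 1) • gOp x Y t + Y (t + 1)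

lemma matProd_eq {N : ℕ} (A : ℕ → Matrix (Fin N) (Fin N) ℝ) (i : ℕ) :
    ∀ k, (∀ u, i < u → u ≤ i + k → (A u).IsDiag) →
      matProd A i k = Matrix.diagonal (fun n => ∏ u ∈ Finset.Icc (i+1) (i+k), A u n n) := by
  intro k
  induction k with
  | zero => intro _; simp [matProd]
  | succ k ih =>
    intro h
    have h1 : (∀ u, i < u → u ≤ i + k → (A u).IsDiag) := fun u hu hu' => h u hu (by omega)
    rw [matProd, ih h1]
    have hd := h (i + k + 1) (by omega) (by omega)
    rw [← hd.diagonal_diag, Matrix.diagonal_mul_diagonal]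
    apply congrArg Matrix.diagonal
    funext n
    rw [show i + (k+1) = (i + k) + 1 from rfl, Finset.prod_Icc_succ_top (by omega)]
    simp [Matrix.diag]
    ring

lemma gOp_eq {d : ℕ} (x : ℕ → ℝ) (Y : ℕ → Fin d → ℝ) :
    ∀ t, gOp x Y t = ∑ s ∈ Finset.Icc 1 t, (∏ u ∈ Finset.Icc (s+1) t, x u) • Y s := by
  intro t
  induction t with
  | zero => simp [gOp]
  | succ t ih =>
    rw [gOp, ih, Finset.sum_Icc_succ_top (by omega), Finset.smul_sum]
    congr 1
    · apply Finset.sum_congr rfl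
      intro s hs
      rw [Finset.mem_Icc] at hs
      rw [Finset.prod_Icc_succ_top (by omega), smul_smul]
      ring_nf
    · rw [Finset.Icc_eq_empty (by omega)]
      simp

/-- **correctness of the diagonal SSD algorithm.**
Let `M` be lower triangular with `M_{j,i} = c_jᵀ A^j ⋯ A^{i+1} b_i` for `1 ≤ i ≤ j ≤ T`,
each `A^t` diagonal, and `M_{j,i} = 0` for `j < i`.  With `aⁿ_t = A^t_{n,n}`,
`bⁿ_t = (b_t)_n`, `cⁿ_t = (c_t)_n`, every input `X ∈ ℝ^{T×d}` satisfies
`Σ_{n=1}^{N} f(cⁿ, g(aⁿ, f(bⁿ, X))) = M · X` (rowwise, at positions `1,…,T`). -/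
theorem diagonal_ssd_algorithm_correct (T N d : ℕ)
    (A : ℕ → Matrix (Fin N) (Fin N) ℝ)
    (hdiag : ∀ t, 1 ≤ t → t ≤ T → (A t).IsDiag)
    (b c : ℕ → Fin N → ℝ) (M : ℕ → ℕ → ℝ)
    (hM : ∀ i j, 1 ≤ i → i ≤ j → j ≤ T →
      M j i = c j ⬝ᵥ (matProd A i (j - i)).mulVec (b i))
    (hlow : ∀ i j, 1 ≤ j → j < i → i ≤ T → M j i = 0) :
    ∀ X : ℕ → Fin d → ℝ, ∀ t, 1 ≤ t → t ≤ T → ∀ j : Fin d,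
      (∑ n : Fin N,
        fOp (fun s => c s n) (gOp (fun s => A s n n) (fOp (fun s => b s n) X)) t j) =
        ∑ s ∈ Finset.Icc 1 T, M t s * X s j := by
  intro X t ht hT j
  -- RHS : drop the upper part
  have hsplit : ∑ s ∈ Finset.Icc 1 T, M t s * X s j = ∑ s ∈ Finset.Icc 1 t, M t s * X s j := by
    rw [show (1:ℕ) = 0 + 1 from rfl, Finset.Icc_add_one_left_eq_Ioc, Finset.Icc_add_one_left_eq_Ioc,
      ← Finset.sum_Ioc_consecutive _ (Nat.zero_le t) hT]
    have : ∑ s ∈ Finset.Ioc t T, M t s * X s j = 0 := by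
      apply Finset.sum_eq_zero
      intro s hs
      rw [Finset.mem_Ioc] at hs
      rw [hlow s t ht hs.1 hs.2]
      ring
    rw [this, add_zero]
  rw [hsplit]
  -- LHS
  simp only [fOp, gOp_eq, Pi.smul_apply, Finset.sum_apply, smul_eq_mul]
  simp only [Finset.mul_sum]
  rw [Finset.sum_comm]
  apply Finset.sum_congr rfl
  intro s hs
  rw [Finset.mem_Icc] at hs
  have hst : s ≤ t := hs.2
  have hM' := hM s t hs.1 hst hT
  rw [matProd_eq A s (t - s) (fun u hu hu' => hdiag u (by omega) (by omega))] at hM'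
  rw [show s + (t - s) = t by omega] at hM'
  rw [hM']
  simp only [dotProduct, Matrix.mulVec_diagonal]
  rw [Finset.sum_mul]
  apply Finset.sum_congr rfl
  intro n _
  ring
end
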